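/- arXiv:2407.07084 — 7 statements merged into one kernel-verified Lean document; each statement's English description precedes it below -/
import Mathlib

section
/- Assume each f_i is μ-convex with μ ≥ 0, the family {f_i} has δ-SOD with δ > 0, and set λ = 2δ. Suppose the S-DANE iterates (with full participation) satisfy, for every round r ≥ 0, the accuracy condition Σ_{i=1}^n ‖∇F_{i,r}(x_{i,r+1})‖² ≤ (λ²/4) Σ_{i=1}^n ‖x_{i,r+1} − v^r‖². Let x* be a minimizer of f, D := ‖x⁰ − x*‖, p := 1 + μ/λ, and for R ≥ 1 define the weighted average x̄^R := (Σ_{r=1}^R p^r x^r)/(Σ_{r=1}^R p^r). Then for every R ≥ 1: f(x̄^R) − f(x*) ≤ δD²/R, and moreover if μ > 0 then f(x̄^R) − f(x*) ≤ μD² / (2[(1 + μ/(2δ))^R − 1]). -/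
open Finset RealInnerProductSpace

/-!
One round of S-DANE is a Lyapunov step:
`f x^{r+1} - f x* ≤ λ/2 ‖v^r - x*‖² - (λ+μ)/2 ‖v^{r+1} - x*‖²`.
Let `M` be the average of the μ-convexity lower bounds of the `f_i` at `x_{i,r+1}`, plus
`λ/2 ‖· - v^r‖²`; up to a constant it is `G_r`, a quadratic of curvature `λ + μ` minimised at
`v^{r+1}`. Hence `f x* + λ/2 ‖x* - v^r‖² ≥ M x* = M v^{r+1} + (λ+μ)/2 ‖x* - v^{r+1}‖²`.
Conversely `M z ≥ f x^{r+1}` for every `z`: convexity at the average `x^{r+1}` reduces this to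
cross terms that Young's inequality, the accuracy condition and δ-SOD with `λ = 2δ` absorb.
Weighting round `r` by `p^{r+1}`, where `p λ = λ + μ`, telescopes, and Jensen's inequality for the
weighted average `x̄^R` concludes, using `∑_{r=1}^R p^r ≥ R p` and
`(p - 1) ∑_{r=1}^R p^r = p (p^R - 1)`.
-/

section InnerProduct

variable {E : Type*} [NormedAddCommGroup E] [InnerProductSpace ℝ E]

theorem inner_le_sq_div_add_mul_sq (a b : E) {c : ℝ} (hc : 0 < c) :
    ⟪a, b⟫ ≤ ‖a‖ ^ 2 / (2 * c) + c / 2 * ‖b‖ ^ 2 := by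
  have h : 0 ≤ ‖a - c • b‖ ^ 2 := sq_nonneg _
  rw [norm_sub_sq_real, real_inner_smul_right, norm_smul, mul_pow, Real.norm_eq_abs, sq_abs] at h
  rw [div_add' _ _ _ (by positivity), le_div_iff₀ (by positivity)]
  nlinarith

theorem sum_inner_le_sum_sq_div_add {ι : Type*} (s : Finset ι) (a b : ι → E) {c : ℝ}
    (hc : 0 < c) :
    ∑ i ∈ s, ⟪a i, b i⟫ ≤ (∑ i ∈ s, ‖a i‖ ^ 2) / (2 * c) + c / 2 * ∑ i ∈ s, ‖b i‖ ^ 2 := by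
  rw [sum_div, mul_sum, ← sum_add_distrib]
  exact sum_le_sum fun i _ => inner_le_sq_div_add_mul_sq (a i) (b i) hc

theorem sum_norm_sub_sq_eq_of_sum_sub_eq_zero {ι : Type*} (s : Finset ι) {y : ι → E} {m : E}
    (hm : ∑ i ∈ s, (y i - m) = 0) (z : E) :
    ∑ i ∈ s, ‖y i - z‖ ^ 2 = ∑ i ∈ s, ‖y i - m‖ ^ 2 + #s * ‖m - z‖ ^ 2 := by
  have h : ∀ i, ‖y i - z‖ ^ 2 = ‖y i - m‖ ^ 2 + 2 * ⟪y i - m, m - z⟫ + ‖m - z‖ ^ 2 := fun i => by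
    rw [← norm_add_sq_real, sub_add_sub_cancel]
  simp only [h, sum_add_distrib, ← mul_sum, ← sum_inner, hm, inner_zero_left, mul_zero,
    add_zero, sum_const, nsmul_eq_mul]

theorem prox_three_point {α β : ℝ} {a b g u : E} (hu : (α + β) • u = α • a + β • b - g)
    (z : E) :
    ⟪g, z - u⟫ + α / 2 * ‖z - a‖ ^ 2 + β / 2 * ‖z - b‖ ^ 2
      = α / 2 * ‖u - a‖ ^ 2 + β / 2 * ‖u - b‖ ^ 2 + (α + β) / 2 * ‖z - u‖ ^ 2 := by
  have hg : g = α • (a - u) + β • (b - u) := by linear_combination (norm := module) hu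
  have expand : ∀ c, ‖z - c‖ ^ 2 = ‖z - u‖ ^ 2 - 2 * ⟪c - u, z - u⟫ + ‖u - c‖ ^ 2 := fun c => by
    rw [show z - c = (z - u) - (c - u) by abel, norm_sub_sq_real, real_inner_comm, norm_sub_rev c]
  rw [hg, expand a, expand b, inner_add_left, real_inner_smul_left, real_inner_smul_left]
  ring

theorem mul_le_sum_mul_of_forall_inner_le {ι : Type*} (s : Finset ι) {f : E → ℝ} {m G : E}
    (hG : ∀ y, f m + ⟪G, y - m⟫ ≤ f y) {w : ι → ℝ} (hw : ∀ i ∈ s, 0 ≤ w i) {x : ι → E}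
    (hm : m = (∑ i ∈ s, w i)⁻¹ • ∑ i ∈ s, w i • x i) :
    (∑ i ∈ s, w i) * f m ≤ ∑ i ∈ s, w i * f (x i) := by
  by_cases hW : ∑ i ∈ s, w i = 0
  · rw [sum_eq_zero_iff_of_nonneg hw] at hW
    rw [sum_eq_zero hW, zero_mul, sum_eq_zero fun i hi => by rw [hW i hi, zero_mul]]
  have hcentred : ∑ i ∈ s, w i • (x i - m) = 0 := by
    rw [sum_congr rfl fun i _ => smul_sub (w i) (x i) m, sum_sub_distrib, ← sum_smul, hm,
      smul_inv_smul₀ hW, sub_self]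
  calc (∑ i ∈ s, w i) * f m = ∑ i ∈ s, w i * (f m + ⟪G, x i - m⟫) := by
        simp only [mul_add, sum_add_distrib, ← real_inner_smul_right, ← inner_sum, hcentred,
          inner_zero_right, add_zero, sum_mul]
    _ ≤ ∑ i ∈ s, w i * f (x i) := sum_le_sum fun i hi => mul_le_mul_of_nonneg_left (hG _) (hw i hi)

theorem sum_sub_eq_zero_of_eq_average {n : ℕ} (hn : 0 < n) {y : Fin n → E} {m : E}
    (hm : m = (1 / (n : ℝ)) • ∑ i, y i) : ∑ i, (y i - m) = 0 := by
  rw [sum_sub_distrib, hm, sum_const, card_univ, Fintype.card_fin, ← Nat.cast_smul_eq_nsmul ℝ,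
    smul_smul, mul_one_div_cancel (by positivity), one_smul, sub_self]

/-- In the application `a i`, `b i` are `∇f_i` and `A`, `B` are `∇f` at `m` and `v`. -/
theorem inexact_prox_stability {ι : Type*} [Fintype ι] {lam : ℝ} (hlam : 0 < lam)
    {y a g b : ι → E} {m v A B : E} (hm : ∑ i, (y i - m) = 0)
    (hb : ∑ i, b i = (Fintype.card ι : ℝ) • B)
    (hacc : ∑ i, ‖g i + B - b i + lam • (y i - v)‖ ^ 2 ≤ lam ^ 2 / 4 * ∑ i, ‖y i - v‖ ^ 2)
    (hsod : ∑ i, ‖(A - a i) - (B - b i)‖ ^ 2 ≤ Fintype.card ι * (lam ^ 2 / 4 * ‖m - v‖ ^ 2))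
    (z : E) :
    0 ≤ ∑ i, (⟪a i, y i - m⟫ + ⟪g i, z - y i⟫) + Fintype.card ι * (lam / 2 * ‖z - v‖ ^ 2) := by
  set e := fun i => g i + B - b i + lam • (y i - v)
  set s := fun i => (A - a i) - (B - b i)
  have hper : ∀ i, ⟪a i, y i - m⟫ + ⟪g i, z - y i⟫ + lam / 2 * ‖z - v‖ ^ 2
      = -⟪e i, y i - z⟫ - ⟪s i, y i - m⟫ + lam / 2 * ‖y i - v‖ ^ 2 + lam / 2 * ‖y i - z‖ ^ 2
        + (⟪A, y i - m⟫ - ⟪B - b i, z - m⟫) := fun i => by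
    simp only [e, s, ← real_inner_self_eq_norm_sq, inner_add_left, inner_sub_left,
      inner_sub_right, real_inner_smul_left]
    ring_nf
    simp only [real_inner_comm]
    ring
  have hcancel : ∑ i, (⟪A, y i - m⟫ - ⟪B - b i, z - m⟫) = 0 := by
    rw [sum_sub_distrib, ← inner_sum, ← sum_inner, hm, sum_sub_distrib, hb, sum_const, card_univ,
      ← Nat.cast_smul_eq_nsmul ℝ, sub_self, inner_zero_right, inner_zero_left, sub_self]
  have hsum : ∑ i, (⟪a i, y i - m⟫ + ⟪g i, z - y i⟫) + Fintype.card ι * (lam / 2 * ‖z - v‖ ^ 2)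
      = -∑ i, ⟪e i, y i - z⟫ - ∑ i, ⟪s i, y i - m⟫ + lam / 2 * ∑ i, ‖y i - v‖ ^ 2
        + lam / 2 * ∑ i, ‖y i - z‖ ^ 2 := by
    have := sum_congr rfl fun i (_ : i ∈ univ) => hper i
    simp only [sum_add_distrib, sum_sub_distrib, sum_neg_distrib, ← mul_sum, hcancel, sum_const,
      card_univ, nsmul_eq_mul, add_zero] at this
    rw [sum_add_distrib]
    linarith
  -- Young with weights `λ` and `λ/2`: after the accuracy bound, `3λ/8 ∑ ‖y i - v‖²` is left to
  -- pay `λ/4 ∑ ‖y i - m‖²` and, through δ-SOD, `λ/4 · #ι ‖m - v‖²`.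
  have he := sum_inner_le_sum_sq_div_add univ e (fun i => y i - z) hlam
  have hs := sum_inner_le_sum_sq_div_add univ s (fun i => y i - m) (half_pos hlam)
  have hvar := sum_norm_sub_sq_eq_of_sum_sub_eq_zero univ hm v
  rw [card_univ] at hvar
  have he' : (∑ i, ‖e i‖ ^ 2) / (2 * lam) ≤ lam / 8 * ∑ i, ‖y i - v‖ ^ 2 := by
    rw [div_le_iff₀ (by positivity)]; nlinarith
  have hs' : (∑ i, ‖s i‖ ^ 2) / (2 * (lam / 2)) ≤ lam / 4 * (Fintype.card ι * ‖m - v‖ ^ 2) := by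
    rw [div_le_iff₀ (by positivity)]; nlinarith
  have hd : 0 ≤ lam * ∑ i, ‖y i - m‖ ^ 2 := by positivity
  have hmv : 0 ≤ lam * (Fintype.card ι * ‖m - v‖ ^ 2) := by positivity
  rw [hsum, hvar]
  rw [hvar] at he'
  linarith

end InnerProduct

section Gradient

variable {E : Type*} [NormedAddCommGroup E] [InnerProductSpace ℝ E] [CompleteSpace E]

theorem gradient_fun_sub {f g : E → ℝ} {x : E} (hf : DifferentiableAt ℝ f x)
    (hg : DifferentiableAt ℝ g x) : gradient (fun z => f z - g z) x = gradient f x - gradient g x :=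
  (InnerProductSpace.toDual ℝ E).injective <| by simp [toDual_gradient, fderiv_fun_sub hf hg]

theorem gradient_const_mul_sum {ι : Type*} (s : Finset ι) {F : ι → E → ℝ}
    {x : E} (c : ℝ) (hF : ∀ i ∈ s, DifferentiableAt ℝ (F i) x) :
    gradient (fun z => c * ∑ i ∈ s, F i z) x = c • ∑ i ∈ s, gradient (F i) x :=
  (InnerProductSpace.toDual ℝ E).injective <| by
    simp [toDual_gradient, fderiv_const_mul (DifferentiableAt.fun_sum hF), fderiv_fun_sum hF]

end Gradient

section Clients

variable {E : Type*} [NormedAddCommGroup E] [InnerProductSpace ℝ E] [CompleteSpace E]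
  {n : ℕ} {F : Fin n → E → ℝ} {f : E → ℝ} {μ : ℝ}

theorem sum_gradient_eq_of_eq_average (hn : 0 < n) (hdiff : ∀ i, Differentiable ℝ (F i))
    (hf : f = fun x => (1 / (n : ℝ)) * ∑ i, F i x) (x : E) :
    ∑ i, gradient (F i) x = (n : ℝ) • gradient f x := by
  rw [hf, gradient_const_mul_sum _ _ fun i _ => (hdiff i).differentiableAt, smul_smul,
    mul_one_div_cancel (by positivity), one_smul]

theorem add_inner_gradient_le_of_eq_average (hn : 0 < n) (hdiff : ∀ i, Differentiable ℝ (F i))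
    (hf : f = fun x => (1 / (n : ℝ)) * ∑ i, F i x) (hμ : 0 ≤ μ)
    (hconv : ∀ i, ∀ x y : E, F i y ≥ F i x + ⟪gradient (F i) x, y - x⟫ + μ / 2 * ‖x - y‖ ^ 2)
    (x y : E) : f x + ⟪gradient f x, y - x⟫ ≤ f y := by
  have hsum := sum_le_sum fun i (_ : i ∈ univ) => hconv i x y
  simp only [sum_add_distrib, ← sum_inner, sum_gradient_eq_of_eq_average hn hdiff hf,
    real_inner_smul_left, sum_const, card_univ, Fintype.card_fin, nsmul_eq_mul] at hsum
  have hμterm : 0 ≤ (n : ℝ) * (μ / 2 * ‖x - y‖ ^ 2) := by positivity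
  have hF : ∀ z, ∑ i, F i z = n * f z := fun z => by rw [hf]; field_simp
  rw [hF, hF] at hsum
  refine le_of_mul_le_mul_left ?_ (show (0 : ℝ) < n by positivity)
  linarith

theorem card_mul_le_sdane_model (hn : 0 < n) (hdiff : ∀ i, Differentiable ℝ (F i))
    (hf : f = fun x => (1 / (n : ℝ)) * ∑ i, F i x) (hμ : 0 ≤ μ)
    (hconv : ∀ i, ∀ x y : E, F i y ≥ F i x + ⟪gradient (F i) x, y - x⟫ + μ / 2 * ‖x - y‖ ^ 2)
    {δ lam : ℝ} (hδ : 0 < δ) (hlam : lam = 2 * δ) {y : Fin n → E} {m v : E}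
    (hsod : (1 / (n : ℝ)) * ∑ i, ‖gradient (fun z => f z - F i z) m
      - gradient (fun z => f z - F i z) v‖ ^ 2 ≤ δ ^ 2 * ‖m - v‖ ^ 2)
    (hm : m = (1 / (n : ℝ)) • ∑ i, y i)
    (hacc : ∑ i, ‖gradient (F i) (y i) + gradient f v - gradient (F i) v + lam • (y i - v)‖ ^ 2
      ≤ lam ^ 2 / 4 * ∑ i, ‖y i - v‖ ^ 2) (z : E) :
    n * f m ≤ ∑ i, (F i (y i) + ⟪gradient (F i) (y i), z - y i⟫) + n * (lam / 2 * ‖z - v‖ ^ 2) := by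
  have hN : (0 : ℝ) < n := by positivity
  have hfdiff : Differentiable ℝ f := by rw [hf]; fun_prop
  rw [one_div, inv_mul_le_iff₀ hN] at hsod
  simp only [gradient_fun_sub (hfdiff _) (hdiff _ _)] at hsod
  have hstab := inexact_prox_stability (by linarith) (sum_sub_eq_zero_of_eq_average hn hm)
    (by rw [Fintype.card_fin]; exact sum_gradient_eq_of_eq_average hn hdiff hf v) hacc
    (hsod.trans_eq (by rw [Fintype.card_fin, hlam]; ring)) z
  have hlow : ∑ i, F i m + ∑ i, ⟪gradient (F i) m, y i - m⟫ ≤ ∑ i, F i (y i) := by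
    rw [← sum_add_distrib]
    exact sum_le_sum fun i _ => by nlinarith [hconv i m (y i), sq_nonneg ‖m - y i‖]
  have hF : n * f m = ∑ i, F i m := by rw [hf]; field_simp
  rw [Fintype.card_fin, sum_add_distrib] at hstab
  rw [hF, sum_add_distrib]
  linarith

theorem sdane_round_descent (hn : 0 < n) (hdiff : ∀ i, Differentiable ℝ (F i))
    (hf : f = fun x => (1 / (n : ℝ)) * ∑ i, F i x) (hμ : 0 ≤ μ)
    (hconv : ∀ i, ∀ x y : E, F i y ≥ F i x + ⟪gradient (F i) x, y - x⟫ + μ / 2 * ‖x - y‖ ^ 2)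
    {δ lam : ℝ} (hδ : 0 < δ) (hlam : lam = 2 * δ) {y : Fin n → E} {m v u xstar : E}
    (hsod : (1 / (n : ℝ)) * ∑ i, ‖gradient (fun z => f z - F i z) m
      - gradient (fun z => f z - F i z) v‖ ^ 2 ≤ δ ^ 2 * ‖m - v‖ ^ 2)
    (hm : m = (1 / (n : ℝ)) • ∑ i, y i)
    (hacc : ∑ i, ‖gradient (F i) (y i) + gradient f v - gradient (F i) v + lam • (y i - v)‖ ^ 2
      ≤ lam ^ 2 / 4 * ∑ i, ‖y i - v‖ ^ 2)
    (hu : u = (lam + μ)⁻¹ • (lam • v + μ • m - (1 / (n : ℝ)) • ∑ i, gradient (F i) (y i))) :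
    f m - f xstar ≤ lam / 2 * ‖v - xstar‖ ^ 2 - (lam + μ) / 2 * ‖u - xstar‖ ^ 2 := by
  have hN : (0 : ℝ) < n := by positivity
  have hlam0 : 0 < lam := by linarith
  have hF : ∑ i, F i xstar = n * f xstar := by rw [hf]; field_simp
  have hmodel := card_mul_le_sdane_model hn hdiff hf hμ hconv hδ hlam hsod hm hacc u
  have hup : ∑ i, F i (y i) + ∑ i, ⟪gradient (F i) (y i), xstar - y i⟫
      + μ / 2 * ∑ i, ‖y i - xstar‖ ^ 2 ≤ ∑ i, F i xstar := by
    rw [mul_sum, ← sum_add_distrib, ← sum_add_distrib]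
    exact sum_le_sum fun i _ => hconv i (y i) xstar
  have hvar := sum_norm_sub_sq_eq_of_sum_sub_eq_zero univ
    (sum_sub_eq_zero_of_eq_average hn hm) xstar
  set gbar := (1 / (n : ℝ)) • ∑ i, gradient (F i) (y i) with hgbar
  have hinner : ∑ i, ⟪gradient (F i) (y i), xstar - y i⟫
      = ∑ i, ⟪gradient (F i) (y i), u - y i⟫ + n * ⟪gbar, xstar - u⟫ := by
    rw [hgbar, real_inner_smul_left, ← mul_assoc, mul_one_div_cancel hN.ne', one_mul, sum_inner,
      ← sum_add_distrib]
    exact sum_congr rfl fun i _ => by rw [← inner_add_right, sub_add_sub_cancel']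
  have hthree := prox_three_point (α := lam) (β := μ) (a := v) (b := m) (g := gbar) (u := u)
    (by rw [hu, smul_inv_smul₀ (by positivity)]) xstar
  rw [norm_sub_rev xstar v, norm_sub_rev xstar m, norm_sub_rev xstar u] at hthree
  simp only [card_univ, Fintype.card_fin] at hvar
  rw [hvar, hF] at hup
  rw [sum_add_distrib] at hmodel
  have hdrop : 0 ≤ μ * ∑ i, ‖y i - m‖ ^ 2 + n * (μ * ‖u - m‖ ^ 2) := by positivity
  refine le_of_mul_le_mul_left ?_ hN
  linarith [congrArg ((n : ℝ) * ·) hthree]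

end Clients

theorem sum_pow_mul_le_of_le_sub {p c : ℝ} (hp : 0 ≤ p) (hc : 0 ≤ c) {φ Ψ : ℕ → ℝ}
    (hΨ : ∀ r, 0 ≤ Ψ r) (h : ∀ r, φ (r + 1) ≤ c * Ψ r - p * c * Ψ (r + 1)) (R : ℕ) :
    ∑ r ∈ Icc 1 R, p ^ r * φ r ≤ p * c * Ψ 0 := by
  have telescoped : ∀ R, ∑ r ∈ Icc 1 R, p ^ r * φ r + p ^ (R + 1) * c * Ψ R ≤ p * c * Ψ 0 := by
    intro R
    induction R with
    | zero => simp
    | succ R ih =>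
      rw [sum_Icc_succ_top (by omega), pow_succ p (R + 1)]
      nlinarith [mul_le_mul_of_nonneg_left (h R) (pow_nonneg hp (R + 1))]
  nlinarith [telescoped R, mul_nonneg (mul_nonneg (pow_nonneg hp (R + 1)) hc) (hΨ R)]

theorem sub_one_mul_sum_Icc_pow (p : ℝ) (R : ℕ) :
    (p - 1) * ∑ r ∈ Icc 1 R, p ^ r = p * (p ^ R - 1) := by
  induction R with
  | zero => simp
  | succ R ih => rw [sum_Icc_succ_top (by omega), mul_add, ih]; ring

theorem le_of_sum_Icc_pow_mul_le {p e c : ℝ} {R : ℕ} (hp : 1 ≤ p) (he : 0 ≤ e)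
    (h : (∑ r ∈ Icc 1 R, p ^ r) * e ≤ p * c) :
    R * e ≤ c ∧ (p ^ R - 1) * e ≤ (p - 1) * c := by
  have hp0 : 0 < p := by linarith
  have hsum : R * p ≤ ∑ r ∈ Icc 1 R, p ^ r := by
    calc R * p = ∑ _r ∈ Icc 1 R, p := by simp
      _ ≤ _ := sum_le_sum fun r hr => le_self_pow₀ hp (by simp at hr; omega)
  have hgeom := sub_one_mul_sum_Icc_pow p R
  constructor
  · refine le_of_mul_le_mul_right ?_ hp0
    nlinarith [mul_le_mul_of_nonneg_right hsum he]
  · refine le_of_mul_le_mul_left ?_ hp0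
    nlinarith [mul_le_mul_of_nonneg_left h (by linarith : 0 ≤ p - 1)]

/-- S-DANE with full client participation: communication complexity bounds
(Theorem 3.3 / `thm:S-DANE-Main`). -/
theorem sdane_full_participation
    {E : Type*} [NormedAddCommGroup E] [InnerProductSpace ℝ E] [CompleteSpace E]
    (n : ℕ) (hn : 0 < n)
    (f' : Fin n → E → ℝ) (hdiff : ∀ i, Differentiable ℝ (f' i))
    (f : E → ℝ) (hfdef : f = fun x => (1 / (n : ℝ)) * ∑ i, f' i x)
    (μ : ℝ) (hμ : 0 ≤ μ)
    (hconv : ∀ i, ∀ x y : E,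
      f' i y ≥ f' i x + ⟪gradient (f' i) x, y - x⟫ + (μ / 2) * ‖x - y‖ ^ 2)
    (δ : ℝ) (hδ : 0 < δ)
    (hSOD : ∀ x y : E,
      (1 / (n : ℝ)) * ∑ i, ‖gradient (fun z => f z - f' i z) x
          - gradient (fun z => f z - f' i z) y‖ ^ 2 ≤ δ ^ 2 * ‖x - y‖ ^ 2)
    (lam : ℝ) (hlam : lam = 2 * δ)
    (x v : ℕ → E) (xi : Fin n → ℕ → E)
    (hv0 : v 0 = x 0)
    (hxrec : ∀ r, x (r + 1) = (1 / (n : ℝ)) • ∑ i, xi i r)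
    (hvrec : ∀ r, v (r + 1) = (lam + μ)⁻¹ •
      (lam • v r + μ • x (r + 1) - (1 / (n : ℝ)) • ∑ i, gradient (f' i) (xi i r)))
    (hacc : ∀ r, ∑ i, ‖gradient (f' i) (xi i r) + gradient f (v r)
          - gradient (f' i) (v r) + lam • (xi i r - v r)‖ ^ 2
      ≤ (lam ^ 2 / 4) * ∑ i, ‖xi i r - v r‖ ^ 2)
    (xstar : E) (hstar : ∀ y, f xstar ≤ f y)
    (D : ℝ) (hD : D = ‖x 0 - xstar‖)
    (p : ℝ) (hp : p = 1 + μ / lam)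
    (xbar : ℕ → E)
    (hxbar : ∀ R, xbar R = (∑ r ∈ Icc 1 R, p ^ r)⁻¹ • ∑ r ∈ Icc 1 R, p ^ r • x r) :
    ∀ R : ℕ, 1 ≤ R →
      f (xbar R) - f xstar ≤ δ * D ^ 2 / R ∧
      (0 < μ →
        f (xbar R) - f xstar ≤ μ * D ^ 2 / (2 * ((1 + μ / (2 * δ)) ^ R - 1))) := by
  intro R hR
  have hlam0 : 0 < lam := by linarith
  have hp1 : 1 ≤ p := by rw [hp]; linarith [div_nonneg hμ hlam0.le]
  have hround : ∀ r, f (x (r + 1)) - f xstar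
      ≤ lam / 2 * ‖v r - xstar‖ ^ 2 - p * (lam / 2) * ‖v (r + 1) - xstar‖ ^ 2 := fun r => by
    rw [show p * (lam / 2) = (lam + μ) / 2 by rw [hp]; field_simp]
    exact sdane_round_descent hn hdiff hfdef hμ hconv hδ hlam (hSOD _ _) (hxrec r) (hacc r)
      (hvrec r)
  have htel := sum_pow_mul_le_of_le_sub (φ := fun r => f (x r) - f xstar)
    (Ψ := fun r => ‖v r - xstar‖ ^ 2) (by positivity) (by positivity) (fun r => by positivity)
    hround R
  have hjensen := mul_le_sum_mul_of_forall_inner_le (Icc 1 R)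
    (add_inner_gradient_le_of_eq_average hn hdiff hfdef hμ hconv (xbar R))
    (fun r _ => by positivity) (hxbar R)
  simp only [mul_sub, sum_sub_distrib, ← sum_mul, hv0, ← hD] at htel
  obtain ⟨hslow, hfast⟩ := le_of_sum_Icc_pow_mul_le (e := f (xbar R) - f xstar)
    (c := lam / 2 * D ^ 2) (R := R) hp1 (sub_nonneg.2 (hstar _)) (by linarith)
  constructor
  · rw [le_div_iff₀ (by positivity)]
    rw [hlam] at hslow
    linarith
  · intro hμ0
    have hpR : 1 < p ^ R := one_lt_pow₀ (by rw [hp]; linarith [div_pos hμ0 hlam0]) (by omega)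
    have hμD : (p - 1) * (lam / 2 * D ^ 2) = μ * D ^ 2 / 2 := by rw [hp]; field_simp; ring
    rw [← hlam, ← hp, le_div_iff₀ (by linarith)]
    linarith
end

section
/- One-step recurrence for S-DANE: let each f_i be μ-convex with μ ≥ 0 and let {f_i} have δ_s-SOD of size s with δ_s > 0; let λ > 0. Fix a subset S ⊆ {1,…,n} with |S| = s, a point v^r ∈ E, and arbitrary points x_{i,r+1} ∈ E for i ∈ S. Put x^{r+1} := (1/s)Σ_{i∈S} x_{i,r+1} and v^{r+1} := (λ v^r + μ x^{r+1} − (1/s)Σ_{i∈S} ∇f_i(x_{i,r+1}))/(λ + μ). Let x* be a minimizer of f. Then (1/λ)[f_S(x^{r+1}) − f_S(x*)] + ((1 + μ/λ)/2)‖v^{r+1} − x*‖² ≤ (1/2)‖v^r − x*‖² − ((1 − δ_s/λ)/2)(1/s)Σ_{i∈S}‖v^r − x_{i,r+1}‖² + (1/λ²)(1/s)Σ_{i∈S}‖∇F_{i,r}(x_{i,r+1})‖², where ∇F_{i,r}(x) := ∇f_i(x) + ∇f_S(v^r) − ∇f_i(v^r) + λ(x − v^r). -/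
/-!
Each `f_i` is bounded below at `x*` by chaining two convexity inequalities: at `x_i` towards `x*`
and at `x^{r+1}` towards `x_i`. Expressing `∇f_i` through `∇F_{i,r}` and `∇h_i^S`, the terms
`⟪∇f_S(x^{r+1}), x_i - x^{r+1}⟫` and `⟪∇h_i^S(v^r), x* - x^{r+1}⟫` average to zero over `S`, and
completing the square turns `⟪∇F_{i,r}(x_i), x* - x_i⟫` into a squared distance from `x*` to a
point whose average over `S` is exactly `v^{r+1}`; Jensen then yields the `‖v^{r+1} - x*‖²` term.
The remaining cross term `⟪∇h_i^S(x^{r+1}) - ∇h_i^S(v^r), x_i - x^{r+1}⟫` is paid for by Young's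
inequality, δ_s-SOD and the bias-variance identity, at a cost of `δ_s / 2` times the average of
`‖x_i - v^r‖²`.
-/

open Finset RealInnerProductSpace

section Gradient

variable {E : Type*} [NormedAddCommGroup E] [InnerProductSpace ℝ E] [CompleteSpace E]
  {f g : E → ℝ} {f' g' x : E}

theorem HasGradientAt.sub (hf : HasGradientAt f f' x) (hg : HasGradientAt g g' x) :
    HasGradientAt (fun z => f z - g z) (f' - g') x := by
  rw [hasGradientAt_iff_hasFDerivAt, map_sub]
  exact hf.hasFDerivAt.sub hg.hasFDerivAt

theorem HasGradientAt.const_mul (c : ℝ) (hf : HasGradientAt f f' x) :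
    HasGradientAt (fun z => c * f z) (c • f') x := by
  rw [hasGradientAt_iff_hasFDerivAt, map_smulₛₗ]
  exact hf.hasFDerivAt.const_mul c

theorem HasGradientAt.fun_sum {ι : Type*} {u : Finset ι} {A : ι → E → ℝ} {A' : ι → E}
    (h : ∀ i ∈ u, HasGradientAt (A i) (A' i) x) :
    HasGradientAt (fun z => ∑ i ∈ u, A i z) (∑ i ∈ u, A' i) x := by
  rw [hasGradientAt_iff_hasFDerivAt, map_sum]
  exact HasFDerivAt.fun_sum fun i hi => (h i hi).hasFDerivAt

end Gradient

namespace Finset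

variable {ι E : Type*} [NormedAddCommGroup E] [InnerProductSpace ℝ E]

noncomputable def avg (S : Finset ι) (x : ι → E) : E := (1 / (#S : ℝ)) • ∑ i ∈ S, x i

variable (S : Finset ι) (x : ι → E)

theorem card_smul_avg : (#S : ℝ) • S.avg x = ∑ i ∈ S, x i := by
  rcases S.eq_empty_or_nonempty with rfl | hS
  · simp
  · rw [avg, smul_smul, mul_one_div_cancel (by exact_mod_cast hS.card_ne_zero), one_smul]

theorem sum_sub_const_eq_card_smul (v : E) :
    ∑ i ∈ S, (x i - v) = (#S : ℝ) • (S.avg x - v) := by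
  rw [sum_sub_distrib, smul_sub, card_smul_avg, sum_const, Nat.cast_smul_eq_nsmul]

theorem sum_sub_avg_eq_zero : ∑ i ∈ S, (x i - S.avg x) = 0 := by
  rw [sum_sub_const_eq_card_smul, sub_self, smul_zero]

theorem sum_norm_sub_avg_sq (v : E) :
    ∑ i ∈ S, ‖x i - S.avg x‖ ^ 2 = ∑ i ∈ S, ‖x i - v‖ ^ 2 - #S * ‖S.avg x - v‖ ^ 2 := by
  have hsplit : ∀ i, ‖x i - S.avg x‖ ^ 2
      = ‖x i - v‖ ^ 2 - 2 * ⟪x i - v, S.avg x - v⟫ + ‖S.avg x - v‖ ^ 2 := fun i => by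
    rw [← norm_sub_sq_real, sub_sub_sub_cancel_right]
  have hcross : ∑ i ∈ S, ⟪x i - v, S.avg x - v⟫ = #S * ‖S.avg x - v‖ ^ 2 := by
    rw [← sum_inner, sum_sub_const_eq_card_smul, real_inner_smul_left, real_inner_self_eq_norm_sq]
  simp only [hsplit, sum_add_distrib, sum_sub_distrib, ← mul_sum, hcross, sum_const, nsmul_eq_mul]
  ring

theorem card_mul_norm_avg_sq_le : #S * ‖S.avg x‖ ^ 2 ≤ ∑ i ∈ S, ‖x i‖ ^ 2 := by
  have h := sum_norm_sub_avg_sq S x 0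
  simp only [sub_zero] at h
  linarith [sum_nonneg fun i (_ : i ∈ S) => sq_nonneg ‖x i - S.avg x‖]

theorem sum_inner_sub_avg_le {δ : ℝ} (hδ : 0 < δ) (a : ι → E) (v : E)
    (ha : ∑ i ∈ S, ‖a i‖ ^ 2 ≤ #S * δ ^ 2 * ‖S.avg x - v‖ ^ 2) :
    ∑ i ∈ S, ⟪a i, x i - S.avg x⟫ ≤ δ / 2 * ∑ i ∈ S, ‖x i - v‖ ^ 2 := by
  have young (i : ι) :
      δ * ⟪a i, x i - S.avg x⟫ ≤ ‖a i‖ ^ 2 / 2 + δ ^ 2 * ‖x i - S.avg x‖ ^ 2 / 2 := by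
    nlinarith [real_inner_le_norm (a i) (x i - S.avg x), sq_nonneg (‖a i‖ - δ * ‖x i - S.avg x‖)]
  have hsum := sum_le_sum fun i (_ : i ∈ S) => young i
  rw [← mul_sum, sum_add_distrib, ← sum_div, ← sum_div, ← mul_sum,
    sum_norm_sub_avg_sq S x v] at hsum
  refine le_of_mul_le_mul_left ?_ hδ
  linarith

end Finset

section Recurrence

variable {ι E : Type*} [NormedAddCommGroup E] [InnerProductSpace ℝ E]

theorem inner_add_mul_norm_sq_eq {κ : ℝ} (hκ : κ ≠ 0) (g y : E) :
    ⟪g, y⟫ + κ / 2 * ‖y‖ ^ 2 = κ / 2 * ‖y + κ⁻¹ • g‖ ^ 2 - ‖g‖ ^ 2 / (2 * κ) := by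
  rw [norm_add_sq_real, real_inner_smul_right, norm_smul, mul_pow, Real.norm_eq_abs, sq_abs,
    real_inner_comm]
  field_simp
  ring

theorem le_of_convex_three_point {φ : E → ℝ} {D : E → E} {μ : ℝ} (hμ : 0 ≤ μ)
    (hconv : ∀ x y, φ y ≥ φ x + ⟪D x, y - x⟫ + μ / 2 * ‖x - y‖ ^ 2) (m x z : E) :
    φ m + ⟪D m, x - m⟫ + ⟪D x, z - x⟫ + μ / 2 * ‖x - z‖ ^ 2 ≤ φ z := by
  have hmx := hconv m x
  have hxz := hconv x z
  nlinarith [sq_nonneg ‖m - x‖]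

/-- `∇h_i^S(y)` when `D i = ∇f_i`. -/
noncomputable def gradDev (S : Finset ι) (D : ι → E → E) (i : ι) (y : E) : E :=
  S.avg (fun j => D j y) - D i y

/-- `∇F_{i,r}(x)` with `v = v^r`: the gradient of the local subproblem
`F_{i,r}(x) = f_i(x) + ⟪∇h_i^S(v^r), x⟫ + lam / 2 * ‖x - v^r‖²`. -/
noncomputable def localGrad (S : Finset ι) (D : ι → E → E) (lam : ℝ) (v : E) (i : ι) (x : E) :
    E :=
  D i x + S.avg (fun j => D j v) - D i v + lam • (x - v)

theorem sum_gradDev_eq_zero (S : Finset ι) (D : ι → E → E) (y : E) :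
    ∑ i ∈ S, gradDev S D i y = 0 := by
  rw [← neg_eq_zero, ← sum_neg_distrib]
  simp only [gradDev, neg_sub]
  exact S.sum_sub_avg_eq_zero _

variable {S : Finset ι} {φ : ι → E → ℝ} {D : ι → E → E} {μ lam : ℝ}

theorem le_of_convex_localGrad {i : ι} (hμ : 0 ≤ μ) (hκ : lam + μ ≠ 0)
    (hconv : ∀ x y, φ i y ≥ φ i x + ⟪D i x, y - x⟫ + μ / 2 * ‖x - y‖ ^ 2) (m x v z : E) :
    φ i m + ⟪S.avg (fun j => D j m), x - m⟫ - ⟪gradDev S D i m - gradDev S D i v, x - m⟫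
        - ⟪gradDev S D i v, z - m⟫ + lam / 2 * ‖x - v‖ ^ 2 - lam / 2 * ‖z - v‖ ^ 2
        + (lam + μ) / 2 * ‖z - x + (lam + μ)⁻¹ • localGrad S D lam v i x‖ ^ 2
        - ‖localGrad S D lam v i x‖ ^ 2 / (2 * (lam + μ))
      ≤ φ i z := by
  set p := S.avg (fun j => D j m)
  set h := gradDev S D i m
  set k := gradDev S D i v
  set g := localGrad S D lam v i x
  have hDm : D i m = p - h := (sub_sub_cancel _ _).symm
  have hDx : D i x = g - k - lam • (x - v) := by simp only [g, k, localGrad, gradDev]; abel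
  have three := le_of_convex_three_point hμ hconv m x z
  rw [hDm, hDx, norm_sub_rev x z] at three
  have hk : ⟪k, x - m⟫ + ⟪k, z - x⟫ = ⟪k, z - m⟫ := by
    rw [← inner_add_right, add_comm, sub_add_sub_cancel]
  have hpolar : lam * ⟪x - v, z - x⟫
      = lam / 2 * ‖z - v‖ ^ 2 - lam / 2 * ‖x - v‖ ^ 2 - lam / 2 * ‖z - x‖ ^ 2 := by
    rw [← sub_add_sub_cancel' x v z, norm_add_sq_real]
    ring
  have hsq := inner_add_mul_norm_sq_eq hκ g (z - x)
  simp only [inner_sub_left, real_inner_smul_left] at three hpolar ⊢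
  linarith

theorem sum_sub_sum_le_of_convex (hμ : 0 ≤ μ) (hκ : lam + μ ≠ 0)
    (hconv : ∀ i ∈ S, ∀ x y, φ i y ≥ φ i x + ⟪D i x, y - x⟫ + μ / 2 * ‖x - y‖ ^ 2)
    (x : ι → E) (v z : E) :
    ∑ i ∈ S, φ i (S.avg x) - ∑ i ∈ S, φ i z + lam / 2 * ∑ i ∈ S, ‖x i - v‖ ^ 2
        + (lam + μ) / 2 * ∑ i ∈ S, ‖z - x i + (lam + μ)⁻¹ • localGrad S D lam v i (x i)‖ ^ 2
      ≤ ∑ i ∈ S, ⟪gradDev S D i (S.avg x) - gradDev S D i v, x i - S.avg x⟫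
        + #S * (lam / 2 * ‖z - v‖ ^ 2)
        + (∑ i ∈ S, ‖localGrad S D lam v i (x i)‖ ^ 2) / (2 * (lam + μ)) := by
  have hsum := sum_le_sum fun i hi =>
    le_of_convex_localGrad (S := S) hμ hκ (hconv i hi) (S.avg x) (x i) v z
  have hmean : ∑ i ∈ S, ⟪S.avg (fun j => D j (S.avg x)), x i - S.avg x⟫ = 0 := by
    rw [← inner_sum, S.sum_sub_avg_eq_zero, inner_zero_right]
  have hdev : ∑ i ∈ S, ⟪gradDev S D i v, z - S.avg x⟫ = 0 := by
    rw [← sum_inner, sum_gradDev_eq_zero, inner_zero_left]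
  simp only [sum_add_distrib, sum_sub_distrib, ← mul_sum, ← sum_div, sum_const, nsmul_eq_mul,
    hmean, hdev] at hsum
  linarith

theorem avg_sub_add_smul_localGrad (hS : S.Nonempty) (hκ : lam + μ ≠ 0) (x : ι → E)
    (v z : E) :
    S.avg (fun i => z - x i + (lam + μ)⁻¹ • localGrad S D lam v i (x i))
      = z - (lam + μ)⁻¹ • (lam • v + μ • S.avg x - S.avg (fun i => D i (x i))) := by
  have hcard : (#S : ℝ) ≠ 0 := by exact_mod_cast hS.card_ne_zero
  rw [← smul_right_inj hcard, S.card_smul_avg]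
  simp only [localGrad, sum_add_distrib, sum_sub_distrib, ← smul_sum, sum_const,
    ← Nat.cast_smul_eq_nsmul ℝ]
  rw [← S.card_smul_avg x, ← S.card_smul_avg (fun i => D i (x i)),
    ← S.card_smul_avg (fun i => D i v)]
  match_scalars <;> field_simp <;> ring

theorem sdane_recurrence_of_convex_of_sod (hS : S.Nonempty) (hμ : 0 ≤ μ)
    (hconv : ∀ i ∈ S, ∀ x y, φ i y ≥ φ i x + ⟪D i x, y - x⟫ + μ / 2 * ‖x - y‖ ^ 2)
    {δ : ℝ} (hδ : 0 < δ)
    (hSOD : ∀ x y : E, (1 / (#S : ℝ)) * ∑ i ∈ S, ‖gradDev S D i x - gradDev S D i y‖ ^ 2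
      ≤ δ ^ 2 * ‖x - y‖ ^ 2)
    (hlam : 0 < lam) (x : ι → E) (v z v' : E)
    (hv' : v' = (lam + μ)⁻¹ • (lam • v + μ • S.avg x - S.avg (fun i => D i (x i)))) :
    (1 / lam) * ((1 / (#S : ℝ)) * ∑ i ∈ S, φ i (S.avg x) - (1 / (#S : ℝ)) * ∑ i ∈ S, φ i z)
        + ((1 + μ / lam) / 2) * ‖v' - z‖ ^ 2
      ≤ (1 / 2) * ‖v - z‖ ^ 2
        - ((1 - δ / lam) / 2) * ((1 / (#S : ℝ)) * ∑ i ∈ S, ‖v - x i‖ ^ 2)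
        + (1 / lam ^ 2) * ((1 / (#S : ℝ)) * ∑ i ∈ S, ‖localGrad S D lam v i (x i)‖ ^ 2) := by
  have hκ : 0 < lam + μ := by linarith
  have hcard : (0 : ℝ) < #S := by exact_mod_cast hS.card_pos
  have hsum := sum_sub_sum_le_of_convex hμ hκ.ne' hconv x v z
  have hsod := S.sum_inner_sub_avg_le x hδ
    (fun i => gradDev S D i (S.avg x) - gradDev S D i v) v (by
      have h := mul_le_mul_of_nonneg_left (hSOD (S.avg x) v) hcard.le
      rwa [← mul_assoc, mul_one_div_cancel hcard.ne', one_mul, ← mul_assoc] at h)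
  have hjensen : #S * ‖z - v'‖ ^ 2
      ≤ ∑ i ∈ S, ‖z - x i + (lam + μ)⁻¹ • localGrad S D lam v i (x i)‖ ^ 2 := by
    rw [hv', ← avg_sub_add_smul_localGrad hS hκ.ne']
    exact S.card_mul_norm_avg_sq_le _
  set G := ∑ i ∈ S, ‖localGrad S D lam v i (x i)‖ ^ 2
  have hG : G / (2 * (lam + μ)) ≤ G / lam :=
    div_le_div_of_nonneg_left (sum_nonneg fun i _ => sq_nonneg _) hlam (by linarith)
  have key : ∑ i ∈ S, φ i (S.avg x) - ∑ i ∈ S, φ i z + (lam + μ) / 2 * (#S * ‖z - v'‖ ^ 2)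
      ≤ #S * (lam / 2 * ‖z - v‖ ^ 2) - (lam - δ) / 2 * ∑ i ∈ S, ‖x i - v‖ ^ 2 + G / lam := by
    linarith [mul_le_mul_of_nonneg_left hjensen (half_pos hκ).le]
  have hscaled := mul_le_mul_of_nonneg_left key (by positivity : 0 ≤ 1 / (#S * lam))
  rw [norm_sub_rev v', norm_sub_rev v]
  simp only [norm_sub_rev v (x _)]
  have : (#S : ℝ) ≠ 0 := hcard.ne'
  have : lam ≠ 0 := hlam.ne'
  refine (Eq.trans_le ?_ hscaled).trans_eq ?_ <;> field_simp

end Recurrence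

theorem sdane_one_step_recurrence_general
    {E : Type*} [NormedAddCommGroup E] [InnerProductSpace ℝ E] [CompleteSpace E]
    (n : ℕ)
    (f' : Fin n → E → ℝ) (hdiff : ∀ i, Differentiable ℝ (f' i))
    (μ : ℝ) (hμ : 0 ≤ μ)
    (hconv : ∀ i, ∀ x y : E,
      f' i y ≥ f' i x + ⟪gradient (f' i) x, y - x⟫ + (μ / 2) * ‖x - y‖ ^ 2)
    (s : ℕ) (hs1 : 1 ≤ s)
    (δs : ℝ) (hδs : 0 < δs)
    (hSOD : ∀ S : Finset (Fin n), S.card = s → ∀ x y : E,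
      (1 / (s : ℝ)) * ∑ i ∈ S,
          ‖gradient (fun z => (1 / (s : ℝ)) * (∑ j ∈ S, f' j z) - f' i z) x
            - gradient (fun z => (1 / (s : ℝ)) * (∑ j ∈ S, f' j z) - f' i z) y‖ ^ 2
        ≤ δs ^ 2 * ‖x - y‖ ^ 2)
    (lam : ℝ) (hlam : 0 < lam)
    (S : Finset (Fin n)) (hS : S.card = s)
    (vr : E) (xi : Fin n → E)
    (xnext : E) (hxnext : xnext = (1 / (s : ℝ)) • ∑ i ∈ S, xi i)
    (vnext : E) (hvnext : vnext = (lam + μ)⁻¹ •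
      (lam • vr + μ • xnext - (1 / (s : ℝ)) • ∑ i ∈ S, gradient (f' i) (xi i)))
    (xstar : E) :
    (1 / lam) * ((1 / (s : ℝ)) * (∑ i ∈ S, f' i xnext)
        - (1 / (s : ℝ)) * (∑ i ∈ S, f' i xstar))
      + ((1 + μ / lam) / 2) * ‖vnext - xstar‖ ^ 2
    ≤ (1 / 2) * ‖vr - xstar‖ ^ 2
      - ((1 - δs / lam) / 2) * ((1 / (s : ℝ)) * ∑ i ∈ S, ‖vr - xi i‖ ^ 2)
      + (1 / lam ^ 2) * ((1 / (s : ℝ)) * ∑ i ∈ S,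
          ‖gradient (f' i) (xi i)
            + gradient (fun z => (1 / (s : ℝ)) * ∑ j ∈ S, f' j z) vr
            - gradient (f' i) vr + lam • (xi i - vr)‖ ^ 2) := by
  subst hS hxnext hvnext
  have hgrad_avg (y : E) : HasGradientAt (fun z => (1 / (#S : ℝ)) * ∑ j ∈ S, f' j z)
      (S.avg fun j => gradient (f' j) y) y :=
    (HasGradientAt.fun_sum fun j _ => (hdiff j y).hasGradientAt).const_mul _
  have hgrad_dev (i : Fin n) (y : E) :
      gradient (fun z => (1 / (#S : ℝ)) * (∑ j ∈ S, f' j z) - f' i z) y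
        = gradDev S (fun j => gradient (f' j)) i y :=
    ((hgrad_avg y).sub (hdiff i y).hasGradientAt).gradient
  rw [(hgrad_avg vr).gradient]
  refine sdane_recurrence_of_convex_of_sod (card_pos.mp hs1) hμ (fun i _ => hconv i) hδs ?_ hlam
    xi vr xstar _ rfl
  simpa only [hgrad_dev] using hSOD S rfl

/-- One-step recurrence for S-DANE (Lemma `thm:S-DANE-OneStepRecurrence2`). -/
theorem sdane_one_step_recurrence
    {E : Type*} [NormedAddCommGroup E] [InnerProductSpace ℝ E] [CompleteSpace E]
    (n : ℕ) (hn : 0 < n)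
    (f' : Fin n → E → ℝ) (hdiff : ∀ i, Differentiable ℝ (f' i))
    (f : E → ℝ) (hfdef : f = fun x => (1 / (n : ℝ)) * ∑ i, f' i x)
    (μ : ℝ) (hμ : 0 ≤ μ)
    (hconv : ∀ i, ∀ x y : E,
      f' i y ≥ f' i x + ⟪gradient (f' i) x, y - x⟫ + (μ / 2) * ‖x - y‖ ^ 2)
    (s : ℕ) (hs1 : 1 ≤ s) (hsn : s ≤ n)
    (δs : ℝ) (hδs : 0 < δs)
    (hSOD : ∀ S : Finset (Fin n), S.card = s → ∀ x y : E,
      (1 / (s : ℝ)) * ∑ i ∈ S,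
          ‖gradient (fun z => (1 / (s : ℝ)) * (∑ j ∈ S, f' j z) - f' i z) x
            - gradient (fun z => (1 / (s : ℝ)) * (∑ j ∈ S, f' j z) - f' i z) y‖ ^ 2
        ≤ δs ^ 2 * ‖x - y‖ ^ 2)
    (lam : ℝ) (hlam : 0 < lam)
    (S : Finset (Fin n)) (hS : S.card = s)
    (vr : E) (xi : Fin n → E)
    (xnext : E) (hxnext : xnext = (1 / (s : ℝ)) • ∑ i ∈ S, xi i)
    (vnext : E) (hvnext : vnext = (lam + μ)⁻¹ •
      (lam • vr + μ • xnext - (1 / (s : ℝ)) • ∑ i ∈ S, gradient (f' i) (xi i)))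
    (xstar : E) (hstar : ∀ z, f xstar ≤ f z) :
    (1 / lam) * ((1 / (s : ℝ)) * (∑ i ∈ S, f' i xnext)
        - (1 / (s : ℝ)) * (∑ i ∈ S, f' i xstar))
      + ((1 + μ / lam) / 2) * ‖vnext - xstar‖ ^ 2
    ≤ (1 / 2) * ‖vr - xstar‖ ^ 2
      - ((1 - δs / lam) / 2) * ((1 / (s : ℝ)) * ∑ i ∈ S, ‖vr - xi i‖ ^ 2)
      + (1 / lam ^ 2) * ((1 / (s : ℝ)) * ∑ i ∈ S,
          ‖gradient (f' i) (xi i)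
            + gradient (fun z => (1 / (s : ℝ)) * ∑ j ∈ S, f' j z) vr
            - gradient (f' i) vr + lam • (xi i - vr)‖ ^ 2) :=
  sdane_one_step_recurrence_general n f' hdiff μ hμ hconv s hs1 δs hδs hSOD lam hlam S hS vr xi
    xnext hxnext vnext hvnext xstar
end

section
/- Let q > 0 with q ≠ 1, let ε ≥ 0, and let (F_k)_{k≥1} and (D_k)_{k≥0} be two sequences of non-negative reals such that F_{k+1} + D_{k+1} ≤ q D_k + ε for every k ≥ 0. Then for every K ≥ 1, with S_K := Σ_{k=1}^K q^{−k}, it holds that (1/S_K) Σ_{k=1}^K F_k q^{−k} + ((1 − q)/(1 − q^K)) D_K ≤ ((1 − q)/(q^{−K} − 1)) D_0 + ε. -/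
open Finset

/-- Sequence lemma (Lemma `thm:SimpleSequence`). -/
theorem simple_sequence_recurrence
    (q : ℝ) (hq : 0 < q) (hq1 : q ≠ 1)
    (ε : ℝ) (hε : 0 ≤ ε)
    (F D : ℕ → ℝ)
    (hF : ∀ k, 1 ≤ k → 0 ≤ F k) (hD : ∀ k, 0 ≤ D k)
    (hrec : ∀ k, F (k + 1) + D (k + 1) ≤ q * D k + ε) :
    ∀ K : ℕ, 1 ≤ K →
      (∑ k ∈ Icc 1 K, (q ^ k)⁻¹)⁻¹ * ∑ k ∈ Icc 1 K, F k * (q ^ k)⁻¹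
          + ((1 - q) / (1 - q ^ K)) * D K
        ≤ ((1 - q) / ((q ^ K)⁻¹ - 1)) * D 0 + ε := by
  have hq0 : q ≠ 0 := ne_of_gt hq
  -- telescoping key inequality
  have key : ∀ K : ℕ, 1 ≤ K →
      ∑ k ∈ Icc 1 K, F k * (q ^ k)⁻¹ + (q ^ K)⁻¹ * D K
        ≤ D 0 + ε * ∑ k ∈ Icc 1 K, (q ^ k)⁻¹ := by
    intro K hK
    induction K with
    | zero => omega
    | succ n ih =>
      have hrecn := hrec n
      have hpow : (0:ℝ) < (q ^ (n+1))⁻¹ := by positivity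
      have hmul : F (n+1) * (q ^ (n+1))⁻¹ + (q ^ (n+1))⁻¹ * D (n+1)
          ≤ (q ^ n)⁻¹ * D n + ε * (q ^ (n+1))⁻¹ := by
        have h := mul_le_mul_of_nonneg_right hrecn (le_of_lt hpow)
        have hqq : q * (q ^ (n+1))⁻¹ = (q ^ n)⁻¹ := by
          field_simp
          ring
        calc F (n+1) * (q ^ (n+1))⁻¹ + (q ^ (n+1))⁻¹ * D (n+1)
            = (F (n+1) + D (n+1)) * (q ^ (n+1))⁻¹ := by ring
          _ ≤ (q * D n + ε) * (q ^ (n+1))⁻¹ := h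
          _ = (q * (q ^ (n+1))⁻¹) * D n + ε * (q ^ (n+1))⁻¹ := by ring
          _ = (q ^ n)⁻¹ * D n + ε * (q ^ (n+1))⁻¹ := by rw [hqq]
      rcases Nat.eq_or_lt_of_le hK with h1 | h1
      · -- base case n + 1 = 1, i.e. n = 0
        have hn0 : n = 0 := by omega
        subst hn0
        simp only [Icc_self, sum_singleton, pow_one]
        simpa [pow_one, pow_zero] using hmul
      · have hn : 1 ≤ n := by omega
        have ihn := ih hn
        rw [Finset.sum_Icc_succ_top (by omega : 1 ≤ n + 1),
          Finset.sum_Icc_succ_top (by omega : 1 ≤ n + 1)]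
        nlinarith [hmul, ihn]
  intro K hK
  have hqK0 : (q:ℝ) ^ K ≠ 0 := pow_ne_zero _ hq0
  have hqK1 : q ^ K ≠ 1 := by
    intro h
    rcases (pow_eq_one_iff_cases.mp h) with h | h | h
    · omega
    · exact hq1 h
    · rcases h with ⟨h, _⟩; linarith
  have h1q : (1:ℝ) - q ≠ 0 := by
    intro h; apply hq1; linarith
  have h1qK : (1:ℝ) - q ^ K ≠ 0 := by
    intro h; apply hqK1; linarith
  have hSval : ∑ k ∈ Icc 1 K, (q ^ k)⁻¹ = ((q ^ K)⁻¹ - 1) / (1 - q) := by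
    have hqi1 : (q:ℝ)⁻¹ ≠ 1 := by
      intro h
      apply hq1
      field_simp at h
      linarith
    have h1 : ∑ k ∈ Icc 1 K, (q ^ k)⁻¹ = ∑ k ∈ range K, (q⁻¹) ^ (1 + k) := by
      rw [← Finset.Ico_add_one_right_eq_Icc, Finset.sum_Ico_eq_sum_range]
      simp [inv_pow, add_comm]
    rw [h1]
    have h2 : ∀ k, (q⁻¹ : ℝ) ^ (1 + k) = q⁻¹ * (q⁻¹) ^ k := by
      intro k; rw [pow_add, pow_one]
    simp_rw [h2]
    rw [← Finset.mul_sum, geom_sum_eq hqi1]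
    rw [inv_pow]
    field_simp
  set S : ℝ := ∑ k ∈ Icc 1 K, (q ^ k)⁻¹ with hS
  have hSpos : 0 < S := by
    apply Finset.sum_pos
    · intro i _; positivity
    · exact ⟨1, by simp [hK]⟩
  have hSne : S ≠ 0 := ne_of_gt hSpos
  have hA : (1 - q) / ((q ^ K)⁻¹ - 1) = S⁻¹ := by
    rw [hSval, inv_div]
  have hB : (1 - q) / (1 - q ^ K) = (q ^ K)⁻¹ * S⁻¹ := by
    rw [hSval, inv_div]
    field_simp
  rw [hA, hB]
  have hkey := key K hK
  have := mul_le_mul_of_nonneg_left hkey (le_of_lt (inv_pos.mpr hSpos))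
  calc S⁻¹ * ∑ k ∈ Icc 1 K, F k * (q ^ k)⁻¹ + (q ^ K)⁻¹ * S⁻¹ * D K
      = S⁻¹ * (∑ k ∈ Icc 1 K, F k * (q ^ k)⁻¹ + (q ^ K)⁻¹ * D K) := by ring
    _ ≤ S⁻¹ * (D 0 + ε * S) := this
    _ = S⁻¹ * D 0 + ε * (S⁻¹ * S) := by ring
    _ = S⁻¹ * D 0 + ε := by rw [inv_mul_cancel₀ hSne]; ring
end

section
/- Let c > 0, μ ≥ 0, and let (A_r)_{r≥0} be a sequence of reals with A_0 = 0, A_{r+1} > A_r for every r ≥ 0, and A_{r+1} ≤ c (A_{r+1} − A_r)² / (1 + μ A_r) for every r ≥ 0. If μ ≤ 4c, then for every R ≥ 0: A_R ≥ R²/(4c), and moreover if μ > 0, A_R ≥ (1/(4μ)) [ (1 + √(μ/(4c)))^R − (1 − √(μ/(4c)))^R ]². -/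
/-!
Writing `A_{r+1} = b`, `A_r = a`, the recursion says `4 k b ≤ (b - a)²` for a suitable `k ≥ 0`,
and since `b - a = (√b - √a)(√b + √a) ≤ 2 √b (√b - √a)` this forces `√b - √a ≥ √k`.
With `k = 1/(4c)` (dropping `μ A_r`) the square roots grow at least linearly, giving `R²/(4c)`.
Rescaling by `μ`, the sequence `u_r = √(μ A_r)` satisfies `u_{r+1} ≥ u_r + q √(1 + u_r²)` with
`q = √(μ/(4c))`, and `S_R = ((1+q)^R - (1-q)^R)/2` is a subsolution of this recursion because
`S_{R+1} = S_R + q C_R` with `C_R = ((1+q)^R + (1-q)^R)/2` and `C_R² - S_R² = (1 - q²)^R ≤ 1`.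
-/

open Real

theorem sqrt_le_sqrt_sub_sqrt_of_four_mul_le_sq {a b k : ℝ} (ha : 0 ≤ a) (hab : a < b)
    (h : 4 * k * b ≤ (b - a) ^ 2) : √k ≤ √b - √a := by
  rcases le_or_gt k 0 with hk | hk
  · rw [sqrt_eq_zero_of_nonpos hk, sub_nonneg]
    exact sqrt_le_sqrt hab.le
  have hx : 0 < √b := sqrt_pos.2 (ha.trans_lt hab)
  have hy : √a ≤ √b := sqrt_le_sqrt hab.le
  have hb : √b ^ 2 = b := sq_sqrt (ha.trans hab.le)
  have ha' : √a ^ 2 = a := sq_sqrt ha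
  have hk' : √k ^ 2 = k := sq_sqrt hk.le
  have h2 : 2 * √k * √b ≤ b - a := by
    refine abs_le_of_sq_le_sq' ?_ (sub_nonneg.2 hab.le) |>.2
    nlinarith
  nlinarith [sqrt_nonneg a, sqrt_nonneg k]

noncomputable def halfDiffPow (q : ℝ) (n : ℕ) : ℝ := ((1 + q) ^ n - (1 - q) ^ n) / 2

theorem halfDiffPow_nonneg {q : ℝ} (hq : 0 ≤ q) (n : ℕ) : 0 ≤ halfDiffPow q n := by
  have h : |1 - q| ^ n ≤ (1 + q) ^ n :=
    pow_le_pow_left₀ (abs_nonneg _) (abs_le.2 ⟨by linarith, by linarith⟩) n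
  have := (le_abs_self ((1 - q) ^ n)).trans_eq (abs_pow _ n)
  unfold halfDiffPow
  linarith

theorem halfDiffPow_succ_le {q : ℝ} (hq0 : 0 ≤ q) (hq1 : q ≤ 1) (n : ℕ) :
    halfDiffPow q (n + 1) ≤ halfDiffPow q n + q * √(1 + halfDiffPow q n ^ 2) := by
  set C := ((1 + q) ^ n + (1 - q) ^ n) / 2
  have hsucc : halfDiffPow q (n + 1) = halfDiffPow q n + q * C := by
    unfold halfDiffPow; ring
  have hcosh : C ^ 2 - halfDiffPow q n ^ 2 = (1 - q ^ 2) ^ n := by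
    unfold halfDiffPow; rw [show 1 - q ^ 2 = (1 + q) * (1 - q) by ring, mul_pow]; ring
  have hpow : (1 - q ^ 2) ^ n ≤ 1 := pow_le_one₀ (by nlinarith) (by nlinarith)
  have hC : C ≤ √(1 + halfDiffPow q n ^ 2) :=
    le_sqrt_of_sq_le (by linarith)
  rw [hsucc]
  gcongr

section Recursion

variable {c μ : ℝ} {A : ℕ → ℝ}

theorem sq_div_le_of_le_mul_sub_sq (hc : 0 < c) (hA : ∀ r, 0 ≤ A r)
    (hmono : ∀ r, A r < A (r + 1)) (hstep : ∀ r, A (r + 1) ≤ c * (A (r + 1) - A r) ^ 2)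
    (R : ℕ) : (R : ℝ) ^ 2 / (4 * c) ≤ A R := by
  have hsqrt : ∀ R : ℕ, R * √(1 / (4 * c)) ≤ √(A R) := by
    intro R
    induction R with
    | zero => simp
    | succ r ih =>
      have hr := sqrt_le_sqrt_sub_sqrt_of_four_mul_le_sq (hA r) (hmono r) (k := 1 / (4 * c))
        (by rw [show 4 * (1 / (4 * c)) * A (r + 1) = A (r + 1) / c by field_simp,
          div_le_iff₀ hc, mul_comm]; exact hstep r)
      push_cast
      linarith
  calc (R : ℝ) ^ 2 / (4 * c) = (R * √(1 / (4 * c))) ^ 2 := by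
        rw [mul_pow, sq_sqrt (by positivity)]; ring
    _ ≤ √(A R) ^ 2 := pow_le_pow_left₀ (by positivity) (hsqrt R) 2
    _ = A R := sq_sqrt (hA R)

theorem sqrt_mul_add_le_sqrt_mul_succ (hc : 0 < c) (hμ : 0 < μ) (hA : ∀ r, 0 ≤ A r)
    (hmono : ∀ r, A r < A (r + 1))
    (hstep : ∀ r, A (r + 1) * (1 + μ * A r) ≤ c * (A (r + 1) - A r) ^ 2) (r : ℕ) :
    √(μ * A r) + √(μ / (4 * c)) * √(1 + √(μ * A r) ^ 2) ≤ √(μ * A (r + 1)) := by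
  have h := sqrt_le_sqrt_sub_sqrt_of_four_mul_le_sq (mul_nonneg hμ.le (hA r))
    (mul_lt_mul_of_pos_left (hmono r) hμ) (k := μ / (4 * c) * (1 + μ * A r))
    (calc 4 * (μ / (4 * c) * (1 + μ * A r)) * (μ * A (r + 1))
          = μ ^ 2 / c * (A (r + 1) * (1 + μ * A r)) := by field_simp
        _ ≤ μ ^ 2 / c * (c * (A (r + 1) - A r) ^ 2) :=
          mul_le_mul_of_nonneg_left (hstep r) (by positivity)
        _ = (μ * A (r + 1) - μ * A r) ^ 2 := by field_simp)
  rw [sq_sqrt (mul_nonneg hμ.le (hA r)), ← sqrt_mul (by positivity)]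
  linarith

theorem halfDiffPow_le_sqrt_mul (hc : 0 < c) (hμ : 0 < μ) (hμc : μ ≤ 4 * c)
    (hA : ∀ r, 0 ≤ A r) (hmono : ∀ r, A r < A (r + 1))
    (hstep : ∀ r, A (r + 1) * (1 + μ * A r) ≤ c * (A (r + 1) - A r) ^ 2) (R : ℕ) :
    halfDiffPow (√(μ / (4 * c))) R ≤ √(μ * A R) := by
  set q := √(μ / (4 * c))
  have hq0 : 0 ≤ q := sqrt_nonneg _
  have hq1 : q ≤ 1 := sqrt_le_one.2 ((div_le_one (by positivity)).2 hμc)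
  induction R with
  | zero => simp [halfDiffPow]
  | succ r ih =>
    calc halfDiffPow q (r + 1)
        ≤ halfDiffPow q r + q * √(1 + halfDiffPow q r ^ 2) := halfDiffPow_succ_le hq0 hq1 r
      _ ≤ √(μ * A r) + q * √(1 + √(μ * A r) ^ 2) := by
        gcongr
        exact halfDiffPow_nonneg hq0 r
      _ ≤ √(μ * A (r + 1)) := sqrt_mul_add_le_sqrt_mul_succ hc hμ hA hmono hstep r

end Recursion

/-- Growth of the sequence `A_r`, case `μ ≤ 4c` (Lemma `thm:GrowthOfAr`, first part). -/
theorem growth_of_Ar_small_mu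
    (c μ : ℝ) (hc : 0 < c) (hμ : 0 ≤ μ) (hμc : μ ≤ 4 * c)
    (A : ℕ → ℝ) (hA0 : A 0 = 0)
    (hmono : ∀ r, A r < A (r + 1))
    (hrec : ∀ r, A (r + 1) ≤ c * (A (r + 1) - A r) ^ 2 / (1 + μ * A r)) :
    ∀ R : ℕ,
      (R : ℝ) ^ 2 / (4 * c) ≤ A R ∧
      (0 < μ →
        (1 / (4 * μ)) * ((1 + Real.sqrt (μ / (4 * c))) ^ R
            - (1 - Real.sqrt (μ / (4 * c))) ^ R) ^ 2 ≤ A R) := by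
  have hA : ∀ r, 0 ≤ A r := fun r =>
    hA0 ▸ (strictMono_nat_of_lt_succ hmono).monotone (Nat.zero_le r)
  have hstep : ∀ r, A (r + 1) * (1 + μ * A r) ≤ c * (A (r + 1) - A r) ^ 2 := fun r =>
    (le_div_iff₀ (by have := mul_nonneg hμ (hA r); positivity)).1 (hrec r)
  intro R
  refine ⟨sq_div_le_of_le_mul_sub_sq hc hA hmono (fun r => ?_) R, fun hμ0 => ?_⟩
  · exact (le_mul_of_one_le_right (hA (r + 1)) (by nlinarith [hA r])).trans (hstep r)
  · have h := halfDiffPow_le_sqrt_mul hc hμ0 hμc hA hmono hstep R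
    have hsq := pow_le_pow_left₀ (halfDiffPow_nonneg (sqrt_nonneg _) R) h 2
    rw [sq_sqrt (mul_nonneg hμ (hA R)), halfDiffPow] at hsq
    rw [one_div, inv_mul_le_iff₀ (by positivity)]
    linarith
end

section
/- Let c > 0, μ > 4c, and let (A_r)_{r≥0} be a sequence of reals with A_0 = 0, A_{r+1} > A_r for every r ≥ 0, and A_{r+1} ≤ c (A_{r+1} − A_r)² / (1 + μ A_r) for every r ≥ 0. Then for every R ≥ 1: A_R ≥ (1/(4c)) (1 + √(μ/(4c)))^{2(R−1)}. -/
/-- Growth of the sequence `A_r`, case `μ > 4c` (Lemma `thm:GrowthOfAr`, second part). -/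
theorem growth_of_Ar_large_mu
    (c μ : ℝ) (hc : 0 < c) (hμc : 4 * c < μ)
    (A : ℕ → ℝ) (hA0 : A 0 = 0)
    (hmono : ∀ r, A r < A (r + 1))
    (hrec : ∀ r, A (r + 1) ≤ c * (A (r + 1) - A r) ^ 2 / (1 + μ * A r)) :
    ∀ R : ℕ, 1 ≤ R →
      (1 / (4 * c)) * (1 + Real.sqrt (μ / (4 * c))) ^ (2 * (R - 1)) ≤ A R := by
  have hμ : 0 < μ := by linarith
  set s := Real.sqrt (μ / (4 * c)) with hs
  have hs0 : 0 < s := Real.sqrt_pos.mpr (by positivity)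
  have hs2 : s ^ 2 = μ / (4 * c) := Real.sq_sqrt (by positivity)
  have hμs : μ = 4 * c * s ^ 2 := by
    rw [hs2]; field_simp
  have hApos : ∀ r, 0 < A (r + 1) := by
    intro r
    induction r with
    | zero => have := hmono 0; rw [hA0] at this; linarith
    | succ n ih => have := hmono (n + 1); linarith
  -- base: A 1 ≥ 1/(4c)
  have hA1 : 1 / (4 * c) ≤ A 1 := by
    have h := hrec 0
    rw [hA0] at h
    simp only [mul_zero, add_zero, sub_zero, div_one] at h
    have hA1pos := hApos 0
    -- A 1 ≤ c * (A 1)^2, A 1 > 0 ⇒ 1 ≤ c * A 1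
    rw [div_le_iff₀ (by positivity)]
    nlinarith [hA1pos]
  -- step: for r ≥ 1, A (r+1) ≥ (1+s)^2 * A r
  have hstep : ∀ r, (1 + s) ^ 2 * A (r + 1) ≤ A (r + 2) := by
    intro r
    set a := A (r + 1) with ha
    set x := A (r + 2) with hx
    have hapos : 0 < a := hApos r
    have hax : a < x := hmono (r + 1)
    have h := hrec (r + 1)
    rw [← ha, ← hx] at h
    have hden : 0 < 1 + μ * a := by positivity
    rw [le_div_iff₀ hden] at h
    -- μ * a * x ≤ c * (x - a)^2
    have key : 4 * s ^ 2 * a * x ≤ (x - a) ^ 2 := by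
      have h1 : μ * a * x ≤ c * (x - a) ^ 2 := by nlinarith [hapos, hax]
      rw [hμs] at h1
      nlinarith [h1]
    by_contra hcon
    push_neg at hcon
    nlinarith [mul_pos (sub_pos.2 hax) (sub_pos.2 hcon),
      mul_pos hapos hs0, mul_pos (mul_pos hapos hapos) hs0,
      mul_pos (mul_pos (mul_pos hapos hapos) hs0) hs0,
      mul_pos (mul_pos (mul_pos (mul_pos hapos hapos) hs0) hs0) hs0,
      sq_nonneg (x - a), sq_nonneg s, mul_pos hapos (hapos.trans hax)]
  -- induction
  intro R hR
  obtain ⟨n, rfl⟩ : ∃ n, R = n + 1 := ⟨R - 1, (Nat.succ_pred_eq_of_pos hR).symm⟩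
  clear hR
  induction n with
  | zero => simpa using hA1
  | succ m ih =>
      have h2 : (m + 1 + 1) - 1 = m + 1 := rfl
      have h1 : (m + 1) - 1 = m := rfl
      rw [h2, pow_mul]
      rw [h1, pow_mul] at ih
      have hstepm := hstep m
      have hpow : (0:ℝ) < ((1 + s) ^ 2) ^ m := by positivity
      calc (1 / (4 * c)) * ((1 + s) ^ 2) ^ (m + 1)
          = (1 + s) ^ 2 * ((1 / (4 * c)) * ((1 + s) ^ 2) ^ m) := by ring
        _ ≤ (1 + s) ^ 2 * A (m + 1) := by
            have : (0:ℝ) ≤ (1 + s) ^ 2 := by positivity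
            exact mul_le_mul_of_nonneg_left ih this
        _ ≤ A (m + 2) := hstepm
end

section
/- Let n ≥ 2 and suppose the differentiable functions {f_i}_{i=1}^n satisfy Δ_s-ED of size s and ζ-BGV. Fix s ∈ {1,…,n}, a point y ∈ E, and for every subset S ⊆ {1,…,n} with |S| = s a point x_S ∈ E. Then for every γ > 0: (1/C(n,s)) Σ_{S : |S|=s} [ f(x_S) − f_S(x_S) ] ≤ ((n − s)/(n − 1)) · γζ²/(2s) + (1/(2γ) + Δ_s/2) · (1/C(n,s)) Σ_{S : |S|=s} ‖x_S − y‖². -/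
/-! For each sample `S`, the descent lemma for the `Δ_s`-smooth function `m_S`, followed by
Young's inequality, gives `m_S(x_S) ≤ m_S(y) + (γ/2)‖∇m_S(y)‖² + (1/(2γ) + Δ_s/2)‖x_S - y‖²`.
Over all `s`-subsets, `m_S(y)` averages to `0`, while `∇m_S(y)` is minus the mean of a sample
of size `s`, drawn without replacement, of the vectors `∇f_i(y) - ∇f(y)`. These sum to zero, so
the sample mean has mean squared norm `(n - s)/((n - 1)s)` times their average squared norm,
which BGV bounds by `ζ²`. -/

open Finset RealInnerProductSpace

namespace Finset

variable {ι κ M : Type*}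

theorem sum_sum_eq_sum_card_filter_nsmul [AddCommMonoid M] [Fintype κ] [DecidableEq κ]
    (P : Finset ι) (A : ι → Finset κ) (v : κ → M) :
    ∑ a ∈ P, ∑ k ∈ A a, v k = ∑ k, #{a ∈ P | k ∈ A a} • v k := by
  rw [sum_comm' (s' := fun k => {a ∈ P | k ∈ A a}) (t' := univ) (by simp)]
  simp only [sum_const]

theorem card_filter_powersetCard_subset_mul_choose [DecidableEq ι] {T U : Finset ι}
    (hTU : T ⊆ U) (s : ℕ) :
    #{S ∈ U.powersetCard s | T ⊆ S} * (#U).choose #T = (#U).choose s * s.choose #T := by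
  by_cases hTs : #T ≤ s
  · rw [card_filter_powersetCard_subset T U s hTU hTs, Nat.choose_mul hTs, mul_comm]
  · have hempty : {S ∈ U.powersetCard s | T ⊆ S} = ∅ :=
      filter_eq_empty_iff.2 fun S hS hTS =>
        hTs ((card_le_card hTS).trans_eq (mem_powersetCard.1 hS).2)
    rw [hempty, Nat.choose_eq_zero_of_lt (not_le.1 hTs)]
    simp

end Finset

section SubsetSampling

open Fintype

variable {ι : Type*} [Fintype ι] [DecidableEq ι]

theorem card_filter_mem_powersetCard_mul_card (i : ι) (s : ℕ) :
    #{S ∈ powersetCard s univ | i ∈ S} * card ι = (card ι).choose s * s := by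
  simpa using card_filter_powersetCard_subset_mul_choose (subset_univ {i}) s

theorem card_filter_mem_mem_powersetCard_mul (i j : ι) (s : ℕ) :
    (#{S ∈ powersetCard s univ | i ∈ S ∧ j ∈ S} : ℝ) * (card ι * (card ι - 1))
      = (card ι).choose s * s * (s - 1)
        + if i = j then ((card ι).choose s : ℝ) * s * (card ι - s) else 0 := by
  obtain rfl | hij := eq_or_ne i j
  · have h : (#{S ∈ powersetCard s univ | i ∈ S} : ℝ) * card ι = (card ι).choose s * s :=
      mod_cast card_filter_mem_powersetCard_mul_card i s
    simp only [and_self, if_true]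
    linear_combination ((card ι : ℝ) - 1) * h
  · have h := card_filter_powersetCard_subset_mul_choose (subset_univ {i, j}) s
    rw [card_pair hij, card_univ] at h
    have h' : (#{S ∈ powersetCard s univ | i ∈ S ∧ j ∈ S} : ℝ) * (card ι).choose 2
        = (card ι).choose s * s.choose 2 := by
      simpa [insert_subset_iff] using congrArg (Nat.cast (R := ℝ)) h
    rw [Nat.cast_choose_two, Nat.cast_choose_two] at h'
    rw [if_neg hij]
    linear_combination 2 * h'

theorem card_nsmul_sum_powersetCard_sum {M : Type*} [AddCommMonoid M] (v : ι → M) (s : ℕ) :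
    card ι • ∑ S ∈ powersetCard s univ, ∑ i ∈ S, v i
      = ((card ι).choose s * s) • ∑ i, v i := by
  simp only [sum_sum_eq_sum_card_filter_nsmul, smul_sum, smul_smul,
    card_filter_mem_powersetCard_mul_card, mul_comm (card ι)]

variable {E : Type*} [NormedAddCommGroup E] [InnerProductSpace ℝ E]

theorem sum_powersetCard_norm_sum_sq_mul {b : ι → E} (hb : ∑ i, b i = 0) (s : ℕ) :
    (∑ S ∈ powersetCard s univ, ‖∑ i ∈ S, b i‖ ^ 2) * (card ι * (card ι - 1))
      = (card ι).choose s * s * (card ι - s) * ∑ i, ‖b i‖ ^ 2 := by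
  have hexpand (S : Finset ι) : ‖∑ i ∈ S, b i‖ ^ 2 = ∑ p ∈ S ×ˢ S, ⟪b p.1, b p.2⟫ := by
    rw [← real_inner_self_eq_norm_sq, sum_inner, sum_product]
    simp only [inner_sum]
  have hcross : ∑ i, ∑ j, ⟪b i, b j⟫ = 0 := by
    simp only [← inner_sum, ← sum_inner, hb, inner_zero_left]
  simp only [hexpand, sum_sum_eq_sum_card_filter_nsmul, Fintype.sum_prod_type, mem_product,
    nsmul_eq_mul, sum_mul, mul_right_comm _ ⟪_, _⟫, card_filter_mem_mem_powersetCard_mul,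
    add_mul, sum_add_distrib, ← mul_sum, hcross, mul_zero, zero_add, ite_mul, zero_mul,
    Fintype.sum_ite_eq]
  simp only [real_inner_self_eq_norm_sq, mul_sum]

theorem inv_choose_mul_sum_powersetCard_norm_smul_sum_sq {b : ι → E} (hb : ∑ i, b i = 0)
    {s : ℕ} (hs : s ≠ 0) (hsn : s ≤ card ι) (hn : 1 < card ι) :
    1 / ((card ι).choose s : ℝ)
        * ∑ S ∈ powersetCard s univ, ‖(1 / (s : ℝ)) • ∑ i ∈ S, b i‖ ^ 2
      = (card ι - s) / (card ι - 1) / s * (1 / card ι * ∑ i, ‖b i‖ ^ 2) := by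
  have h := sum_powersetCard_norm_sum_sq_mul hb s
  have hC : ((card ι).choose s : ℝ) ≠ 0 := by exact_mod_cast (Nat.choose_pos hsn).ne'
  have hn1 : (card ι : ℝ) - 1 ≠ 0 := sub_ne_zero.2 (by exact_mod_cast hn.ne')
  simp only [norm_smul, mul_pow, ← mul_sum, norm_div, norm_one, Real.norm_natCast]
  field_simp
  linear_combination h

theorem sum_powersetCard_mean_eq (v : ι → ℝ) {s : ℕ} (hs : s ≠ 0) :
    ∑ S ∈ powersetCard s univ, 1 / (s : ℝ) * ∑ i ∈ S, v i
      = (card ι).choose s * (1 / (card ι : ℝ) * ∑ i, v i) := by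
  rcases (card ι).eq_zero_or_pos with hn | hn
  · rw [powersetCard_eq_empty.2 (by rw [card_univ, hn]; omega)]
    simp [hn]
  have h : (card ι : ℝ) * ∑ S ∈ powersetCard s univ, ∑ i ∈ S, v i
      = (card ι).choose s * s * ∑ i, v i := by
    simpa using card_nsmul_sum_powersetCard_sum v s
  rw [← mul_sum]
  field_simp
  linear_combination h

end SubsetSampling

theorem real_inner_le_half_mul_norm_sq_add {E : Type*} [NormedAddCommGroup E]
    [InnerProductSpace ℝ E] {γ : ℝ} (hγ : 0 < γ) (a v : E) :
    ⟪a, v⟫ ≤ γ / 2 * ‖a‖ ^ 2 + 1 / (2 * γ) * ‖v‖ ^ 2 := by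
  have h : 2 * γ * ⟪a, v⟫ ≤ γ ^ 2 * ‖a‖ ^ 2 + ‖v‖ ^ 2 := by
    nlinarith [real_inner_le_norm a v, sq_nonneg (γ * ‖a‖ - ‖v‖)]
  rw [← mul_le_mul_iff_of_pos_left (by positivity : 0 < 2 * γ)]
  field_simp
  linarith

section Gradient

variable {E : Type*} [NormedAddCommGroup E] [InnerProductSpace ℝ E] [CompleteSpace E]
  {f g : E → ℝ} {f' g' x : E}

theorem HasGradientAt.sum {ι : Type*} {t : Finset ι} {F : ι → E → ℝ} {F' : ι → E}
    (h : ∀ i ∈ t, HasGradientAt (F i) (F' i) x) :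
    HasGradientAt (fun z => ∑ i ∈ t, F i z) (∑ i ∈ t, F' i) x := by
  rw [hasGradientAt_iff_hasFDerivAt]
  simpa using HasFDerivAt.fun_sum fun i hi => hasGradientAt_iff_hasFDerivAt.1 (h i hi)

theorem Differentiable.hasDerivAt_comp_add_smul (hf : Differentiable ℝ f) (y d : E) (t : ℝ) :
    HasDerivAt (fun t : ℝ => f (y + t • d)) ⟪gradient f (y + t • d), d⟫ t := by
  have hline : HasDerivAt (fun t : ℝ => y + t • d) d t := by
    simpa using ((hasDerivAt_id t).smul_const d).const_add y
  simpa [Function.comp_def] using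
    (hasGradientAt_iff_hasFDerivAt.1 (hf _).hasGradientAt).comp_hasDerivAt t hline

theorem Differentiable.le_add_inner_gradient_add_sq (hf : Differentiable ℝ f) {L : ℝ}
    (hL : ∀ a b, ‖gradient f a - gradient f b‖ ≤ L * ‖a - b‖) (x y : E) :
    f x ≤ f y + ⟪gradient f y, x - y⟫ + L / 2 * ‖x - y‖ ^ 2 := by
  set d := x - y
  have hderiv (t : ℝ) : HasDerivAt (fun t => f (y + t • d) - t * ⟪gradient f y, d⟫)
      (⟪gradient f (y + t • d), d⟫ - ⟪gradient f y, d⟫) t := by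
    simpa only [one_mul] using
      (hf.hasDerivAt_comp_add_smul y d t).fun_sub ((hasDerivAt_id' t).mul_const _)
  have hbound (t : ℝ) (ht : 0 ≤ t) :
      ⟪gradient f (y + t • d), d⟫ - ⟪gradient f y, d⟫ ≤ L * ‖d‖ ^ 2 / 2 * (2 * t) := by
    calc ⟪gradient f (y + t • d), d⟫ - ⟪gradient f y, d⟫
        = ⟪gradient f (y + t • d) - gradient f y, d⟫ := (inner_sub_left ..).symm
      _ ≤ ‖gradient f (y + t • d) - gradient f y‖ * ‖d‖ := real_inner_le_norm ..
      _ ≤ L * ‖t • d‖ * ‖d‖ := by gcongr; simpa using hL (y + t • d) y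
      _ = L * ‖d‖ ^ 2 / 2 * (2 * t) := by rw [norm_smul, Real.norm_of_nonneg ht]; ring
  have key := image_le_of_deriv_right_le_deriv_boundary (a := 0) (b := 1)
    (B := fun t => f y + L * ‖d‖ ^ 2 / 2 * t ^ 2)
    (fun t _ => (hderiv t).continuousAt.continuousWithinAt)
    (fun t _ => (hderiv t).hasDerivWithinAt) (by simp) (by fun_prop)
    (fun t _ => ((hasDerivAt_pow 2 t).const_mul _ |>.const_add _).hasDerivWithinAt)
    (fun t ht => by simpa using hbound t ht.1) ⟨zero_le_one, le_rfl⟩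
  simp only [one_smul, one_mul, one_pow, mul_one, d, add_sub_cancel] at key
  linarith

theorem sum_gradient_sub_gradient_mean_eq_zero {ι : Type*} [Fintype ι] {F : ι → E → ℝ}
    {y : E} (hF : ∀ i, DifferentiableAt ℝ (F i) y) :
    ∑ i, (gradient (F i) y - gradient (fun z => 1 / (Fintype.card ι : ℝ) * ∑ i, F i z) y)
      = 0 := by
  rcases isEmpty_or_nonempty ι with _ | _
  · simp
  rw [(HasGradientAt.const_mul _ (HasGradientAt.sum fun i _ => (hF i).hasGradientAt)).gradient,
    sum_sub_distrib, sum_const, card_univ, ← Nat.cast_smul_eq_nsmul ℝ, smul_smul,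
    mul_one_div_cancel (by positivity), one_smul, sub_self]

theorem hasGradientAt_sub_mean {ι : Type*} {F : ι → E → ℝ} {S : Finset ι} {s : ℕ} {y : E}
    (hf : DifferentiableAt ℝ f y) (hF : ∀ i, DifferentiableAt ℝ (F i) y) (hS : #S = s)
    (hs : s ≠ 0) :
    HasGradientAt (fun z => f z - 1 / (s : ℝ) * ∑ j ∈ S, F j z)
      (-((1 / (s : ℝ)) • ∑ i ∈ S, (gradient (F i) y - gradient f y))) y := by
  convert hf.hasGradientAt.sub
    ((HasGradientAt.sum fun i _ => (hF i).hasGradientAt).const_mul (1 / (s : ℝ))) using 1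
  rw [sum_sub_distrib, sum_const, hS, smul_sub, ← Nat.cast_smul_eq_nsmul ℝ, smul_smul,
    one_div_mul_cancel (by exact_mod_cast hs), one_smul, neg_sub]

theorem sub_mean_le_of_gradient_lipschitz {ι : Type*} {F : ι → E → ℝ} {S : Finset ι} {s : ℕ}
    {L γ : ℝ} (hf : Differentiable ℝ f) (hF : ∀ i, Differentiable ℝ (F i)) (hS : #S = s)
    (hs : s ≠ 0)
    (hL : ∀ a b, ‖gradient (fun z => f z - 1 / (s : ℝ) * ∑ j ∈ S, F j z) a
      - gradient (fun z => f z - 1 / (s : ℝ) * ∑ j ∈ S, F j z) b‖ ≤ L * ‖a - b‖)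
    (hγ : 0 < γ) (x y : E) :
    f x - 1 / (s : ℝ) * ∑ i ∈ S, F i x
      ≤ f y - 1 / (s : ℝ) * ∑ i ∈ S, F i y
        + γ / 2 * ‖(1 / (s : ℝ)) • ∑ i ∈ S, (gradient (F i) y - gradient f y)‖ ^ 2
        + (1 / (2 * γ) + L / 2) * ‖x - y‖ ^ 2 := by
  have hm : Differentiable ℝ fun z => f z - 1 / (s : ℝ) * ∑ j ∈ S, F j z :=
    hf.sub ((Differentiable.fun_sum fun j _ => hF j).const_mul _)
  have hdescent := hm.le_add_inner_gradient_add_sq hL x y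
  have hyoung := real_inner_le_half_mul_norm_sq_add hγ
    (gradient (fun z => f z - 1 / (s : ℝ) * ∑ j ∈ S, F j z) y) (x - y)
  rw [(hasGradientAt_sub_mean (hf y) (fun i => hF i y) hS hs).gradient] at hdescent hyoung
  rw [norm_neg] at hyoung
  linarith

end Gradient

/-- Bound on the averaged difference `f − f_S` under ED and BGV
(Lemma `thm:FunctionDiff-Lowerbound`). -/
theorem function_diff_lower_bound
    {E : Type*} [NormedAddCommGroup E] [InnerProductSpace ℝ E] [CompleteSpace E]
    (n : ℕ) (hn : 2 ≤ n)
    (f' : Fin n → E → ℝ) (hdiff : ∀ i, Differentiable ℝ (f' i))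
    (f : E → ℝ) (hfdef : f = fun x => (1 / (n : ℝ)) * ∑ i, f' i x)
    (s : ℕ) (hs1 : 1 ≤ s) (hsn : s ≤ n)
    (Δs : ℝ)
    (hED : ∀ S : Finset (Fin n), S.card = s → ∀ x y : E,
      ‖gradient (fun z => f z - (1 / (s : ℝ)) * ∑ j ∈ S, f' j z) x
        - gradient (fun z => f z - (1 / (s : ℝ)) * ∑ j ∈ S, f' j z) y‖
      ≤ Δs * ‖x - y‖)
    (ζ : ℝ)
    (hBGV : ∀ x : E,
      (1 / (n : ℝ)) * ∑ i, ‖gradient (f' i) x - gradient f x‖ ^ 2 ≤ ζ ^ 2)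
    (y : E) (xS : Finset (Fin n) → E)
    (γ : ℝ) (hγ : 0 < γ) :
    (1 / (n.choose s : ℝ)) * ∑ S ∈ powersetCard s (univ : Finset (Fin n)),
        (f (xS S) - (1 / (s : ℝ)) * ∑ i ∈ S, f' i (xS S))
      ≤ (((n : ℝ) - s) / ((n : ℝ) - 1)) * (γ * ζ ^ 2 / (2 * s))
        + (1 / (2 * γ) + Δs / 2) *
          ((1 / (n.choose s : ℝ)) * ∑ S ∈ powersetCard s (univ : Finset (Fin n)),
            ‖xS S - y‖ ^ 2) := by
  have hs : s ≠ 0 := by omega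
  have hf : Differentiable ℝ f :=
    hfdef ▸ (Differentiable.fun_sum fun i _ => hdiff i).const_mul _
  have hb : ∑ i, (gradient (f' i) y - gradient f y) = 0 := by
    simpa [hfdef] using sum_gradient_sub_gradient_mean_eq_zero fun i => hdiff i y
  have hper (S) (hS : S ∈ powersetCard s univ) :=
    have hcard := mem_powersetCard_univ.1 hS
    sub_mean_le_of_gradient_lipschitz hf hdiff hcard hs (hED S hcard) hγ (xS S) y
  have hmean : ∑ S ∈ powersetCard s univ, (f y - 1 / (s : ℝ) * ∑ i ∈ S, f' i y) = 0 := by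
    rw [sum_sub_distrib, sum_powersetCard_mean_eq _ hs]
    simp [hfdef]
  have hvar := inv_choose_mul_sum_powersetCard_norm_smul_sum_sq hb hs
    (by rwa [Fintype.card_fin]) (by rw [Fintype.card_fin]; omega)
  rw [Fintype.card_fin] at hvar
  have hcoeff : 0 ≤ ((n : ℝ) - s) / ((n : ℝ) - 1) / s := by
    have : (s : ℝ) ≤ n := by exact_mod_cast hsn
    have : (1 : ℝ) ≤ n := by exact_mod_cast (by omega : 1 ≤ n)
    exact div_nonneg (div_nonneg (by linarith) (by linarith)) (by positivity)
  calc _ ≤ 1 / (n.choose s : ℝ) * ∑ S ∈ powersetCard s univ, _ :=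
        mul_le_mul_of_nonneg_left (sum_le_sum hper) (by positivity)
    _ = γ / 2 * (((n : ℝ) - s) / ((n : ℝ) - 1) / s
          * (1 / n * ∑ i, ‖gradient (f' i) y - gradient f y‖ ^ 2))
          + (1 / (2 * γ) + Δs / 2) * ((1 / (n.choose s : ℝ)) * ∑ S ∈ powersetCard s univ,
            ‖xS S - y‖ ^ 2) := by
      rw [sum_add_distrib, sum_add_distrib, hmean, ← mul_sum, ← mul_sum, ← hvar]
      ring
    _ ≤ _ := by
      grw [hBGV y]
      exact le_of_eq (by ring)
end

section
/- Error lower bound: suppose the differentiable functions {f_i}_{i=1}^n satisfy δ_s-SOD of size s with δ_s > 0. Fix S ⊆ {1,…,n} with |S| = s, a point v ∈ E, a real λ > δ_s, and points x_i ∈ E for i ∈ S; put x̄_S := (1/s)Σ_{i∈S} x_i. Then (1/s)Σ_{i∈S} ⟨∇f_i(x_i) + ∇h_i^S(x̄_S), v − x_i⟩ − (1/(2λ)) ‖(1/s)Σ_{i∈S} ∇f_i(x_i)‖² ≥ ((λ − δ_s)/2)(1/s)Σ_{i∈S} ‖v − x_i‖² − (1/λ)(1/s)Σ_{i∈S} ‖∇F_i(x_i)‖²,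 where ∇F_i(x) := ∇f_i(x) + ∇h_i^S(v) + λ(x − v). -/
open Finset RealInnerProductSpace

/-!
Put `w i = ∇f_i(x_i) + ∇h_i(v)` and `u i = v - x_i`, so that `∇F_i(x_i) = w i - λ u i`.
Because the `∇h_i` sum to zero over `S`, the mean of the `∇f_i(x_i)` is the mean of the `w i`,
whose squared norm is at most the mean of `‖w i‖²`; the exact identity
`⟪w, u⟫ - ‖w‖² / (2λ) = (λ/2) ‖u‖² - ‖w - λ u‖² / (2λ)` then accounts for the `λ`-terms.
The cross term `⟪∇h_i(x̄) - ∇h_i(v), u i⟫` also has differences summing to zero, so `u i` may be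
replaced by `u i - (v - x̄)`; Young's inequality with weight `δ`, the SOD bound on the differences
and the variance decomposition `∑ ‖u i‖² = ∑ ‖u i - ū‖² + s ‖ū‖²` bound it below by
`-(δ/2) ∑ ‖u i‖²`.
-/

theorem card_smul_inv_card_smul_sum {ι M : Type*} [AddCommGroup M] [Module ℝ M] (S : Finset ι)
    (u : ι → M) :
    (#S : ℝ) • (#S : ℝ)⁻¹ • ∑ i ∈ S, u i = ∑ i ∈ S, u i := by
  rcases S.eq_empty_or_nonempty with rfl | hS
  · simp
  · rw [smul_inv_smul₀ (by positivity)]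

theorem sum_average_sub_eq_zero {ι : Type*} (S : Finset ι) (a : ι → ℝ) :
    ∑ i ∈ S, ((1 / (#S : ℝ)) * ∑ j ∈ S, a j - a i) = 0 := by
  have h := card_smul_inv_card_smul_sum S a
  simp only [smul_eq_mul] at h
  rw [sum_sub_distrib, sum_const, nsmul_eq_mul, one_div, h, sub_self]

theorem norm_sq_average_le {ι E : Type*} [SeminormedAddCommGroup E] [NormedSpace ℝ E]
    (S : Finset ι) (w : ι → E) :
    ‖(1 / (#S : ℝ)) • ∑ i ∈ S, w i‖ ^ 2 ≤ 1 / (#S : ℝ) * ∑ i ∈ S, ‖w i‖ ^ 2 :=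
  calc ‖(1 / (#S : ℝ)) • ∑ i ∈ S, w i‖ ^ 2
      = (1 / (#S : ℝ)) ^ 2 * ‖∑ i ∈ S, w i‖ ^ 2 := by
        rw [norm_smul, mul_pow, Real.norm_of_nonneg (by positivity)]
    _ ≤ (1 / (#S : ℝ)) ^ 2 * (#S * ∑ i ∈ S, ‖w i‖ ^ 2) := by
        gcongr
        exact (pow_le_pow_left₀ (norm_nonneg _) (norm_sum_le _ _) 2).trans
          sq_sum_le_card_mul_sum_sq
    _ = 1 / (#S : ℝ) * ∑ i ∈ S, ‖w i‖ ^ 2 := by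
        rw [← mul_assoc, one_div, sq, ← inv_inv (#S : ℝ), inv_inv (#S : ℝ)⁻¹, mul_self_mul_inv]

theorem sum_gradient_eq_zero {𝕜 F ι : Type*} [RCLike 𝕜] [NormedAddCommGroup F]
    [InnerProductSpace 𝕜 F] [CompleteSpace F] (S : Finset ι) {φ : ι → F → 𝕜} {y : F}
    (hφ : ∀ i ∈ S, DifferentiableAt 𝕜 (φ i) y) (hsum : ∀ z, ∑ i ∈ S, φ i z = 0) :
    ∑ i ∈ S, gradient (φ i) y = 0 := by
  have hzero : (fun z => ∑ i ∈ S, φ i z) = fun _ => 0 := funext hsum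
  simp only [gradient, ← map_sum, ← fderiv_fun_sum hφ, hzero, fderiv_const_apply, map_zero]

section ErrorBound

variable {ι E : Type*} [NormedAddCommGroup E] [InnerProductSpace ℝ E]

theorem sum_norm_sq_eq_sum_norm_sub_sq_add (S : Finset ι) (u : ι → E) {c : E}
    (hc : (#S : ℝ) • c = ∑ i ∈ S, u i) :
    ∑ i ∈ S, ‖u i‖ ^ 2 = ∑ i ∈ S, ‖u i - c‖ ^ 2 + #S * ‖c‖ ^ 2 := by
  have h : ∀ i, ‖u i‖ ^ 2 = ‖u i - c‖ ^ 2 + 2 * ⟪u i - c, c⟫ + ‖c‖ ^ 2 := fun i => by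
    rw [← norm_add_sq_real, sub_add_cancel]
  simp only [h, sum_add_distrib, ← mul_sum, ← sum_inner, sum_sub_distrib, sum_const,
    ← Nat.cast_smul_eq_nsmul ℝ, hc, sub_self, inner_zero_left, mul_zero, add_zero, smul_eq_mul]

theorem neg_half_mul_sum_norm_sq_le_sum_inner (S : Finset ι) (d u : ι → E) {c : E} {δ : ℝ}
    (hδ : 0 < δ) (hd : ∑ i ∈ S, d i = 0) (hc : (#S : ℝ) • c = ∑ i ∈ S, u i)
    (hdc : ∑ i ∈ S, ‖d i‖ ^ 2 ≤ #S * (δ ^ 2 * ‖c‖ ^ 2)) :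
    -(δ / 2) * ∑ i ∈ S, ‖u i‖ ^ 2 ≤ ∑ i ∈ S, ⟪d i, u i⟫ := by
  have hcentre : ∑ i ∈ S, ⟪d i, u i⟫ = ∑ i ∈ S, ⟪d i, u i - c⟫ := by
    simp only [inner_sub_right, sum_sub_distrib, ← sum_inner, hd, inner_zero_left, sub_zero]
  have young : ∀ i, -‖d i‖ ^ 2 - δ ^ 2 * ‖u i - c‖ ^ 2 ≤ 2 * δ * ⟪d i, u i - c⟫ := fun i => by
    have h := sq_nonneg ‖d i + δ • (u i - c)‖
    rw [norm_add_sq_real, norm_smul, inner_smul_right, mul_pow, Real.norm_of_nonneg hδ.le] at h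
    linarith
  have hyoung := sum_le_sum fun i (_ : i ∈ S) => young i
  simp only [sum_sub_distrib, sum_neg_distrib, ← mul_sum] at hyoung
  rw [hcentre, sum_norm_sq_eq_sum_norm_sub_sq_add S u hc]
  refine le_of_mul_le_mul_left ?_ (by positivity : (0 : ℝ) < 2 * δ)
  linear_combination hyoung + hdc

theorem inner_sub_inv_mul_norm_sq (w u : E) {lam : ℝ} (hlam : lam ≠ 0) :
    ⟪w, u⟫ - (2 * lam)⁻¹ * ‖w‖ ^ 2 = lam / 2 * ‖u‖ ^ 2 - (2 * lam)⁻¹ * ‖w - lam • u‖ ^ 2 := by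
  rw [norm_sub_sq_real, norm_smul, inner_smul_right, mul_pow, Real.norm_eq_abs, sq_abs]
  field_simp
  ring

theorem error_lower_bound_of_sum_eq_zero (S : Finset ι) (g Hx Hv x : ι → E) (v : E)
    {δ lam : ℝ} (hHx : ∑ i ∈ S, Hx i = 0) (hHv : ∑ i ∈ S, Hv i = 0)
    (hSOD : 1 / (#S : ℝ) * ∑ i ∈ S, ‖Hx i - Hv i‖ ^ 2
      ≤ δ ^ 2 * ‖(1 / (#S : ℝ)) • ∑ i ∈ S, x i - v‖ ^ 2)
    (hδ : 0 < δ) (hlam : δ < lam) :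
    1 / (#S : ℝ) * ∑ i ∈ S, ⟪g i + Hx i, v - x i⟫
      - 1 / (2 * lam) * ‖(1 / (#S : ℝ)) • ∑ i ∈ S, g i‖ ^ 2
    ≥ (lam - δ) / 2 * (1 / (#S : ℝ) * ∑ i ∈ S, ‖v - x i‖ ^ 2)
      - 1 / lam * (1 / (#S : ℝ) * ∑ i ∈ S, ‖g i + Hv i + lam • (x i - v)‖ ^ 2) := by
  rcases S.eq_empty_or_nonempty with rfl | hS
  · simp
  have hlam0 : 0 < lam := hδ.trans hlam
  have hsplit : ∀ i, ⟪g i + Hx i, v - x i⟫ = ⟪g i + Hv i, v - x i⟫ + ⟪Hx i - Hv i, v - x i⟫ :=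
    fun i => by rw [← inner_add_left, add_add_sub_cancel]
  have hshift : ∀ i, g i + Hv i + lam • (x i - v) = (g i + Hv i) - lam • (v - x i) :=
    fun i => by module
  have hsum_g : ∑ i ∈ S, g i = ∑ i ∈ S, (g i + Hv i) := by rw [sum_add_distrib, hHv, add_zero]
  have hmean : (#S : ℝ) • (v - (#S : ℝ)⁻¹ • ∑ i ∈ S, x i) = ∑ i ∈ S, (v - x i) := by
    rw [smul_sub, card_smul_inv_card_smul_sum, sum_sub_distrib, sum_const, Nat.cast_smul_eq_nsmul]
  rw [one_div, inv_mul_le_iff₀ (by positivity), norm_sub_rev] at hSOD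
  have hcross := neg_half_mul_sum_norm_sq_le_sum_inner S (fun i => Hx i - Hv i) (fun i => v - x i)
    hδ (by rw [sum_sub_distrib, hHx, hHv, sub_zero]) hmean hSOD
  have hjensen := norm_sq_average_le S (fun i => g i + Hv i)
  have hpoint : ∑ i ∈ S, ⟪g i + Hv i, v - x i⟫ - (2 * lam)⁻¹ * ∑ i ∈ S, ‖g i + Hv i‖ ^ 2
      = lam / 2 * ∑ i ∈ S, ‖v - x i‖ ^ 2
        - (2 * lam)⁻¹ * ∑ i ∈ S, ‖(g i + Hv i) - lam • (v - x i)‖ ^ 2 := by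
    simp only [mul_sum, ← sum_sub_distrib, inner_sub_inv_mul_norm_sq _ _ hlam0.ne']
  have hslack : 0 ≤ (2 * lam)⁻¹ * (1 / (#S : ℝ) *
      ∑ i ∈ S, ‖(g i + Hv i) - lam • (v - x i)‖ ^ 2) := by
    positivity
  rw [hsum_g]
  simp only [hsplit, hshift, sum_add_distrib (f := fun i => ⟪g i + Hv i, v - x i⟫)]
  linear_combination (1 / (#S : ℝ)) * (hcross - hpoint) + (2 * lam)⁻¹ * hjensen + hslack

end ErrorBound

theorem error_lower_bound_general
    {E : Type*} [NormedAddCommGroup E] [InnerProductSpace ℝ E] [CompleteSpace E]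
    (n : ℕ)
    (f' : Fin n → E → ℝ) (hdiff : ∀ i, Differentiable ℝ (f' i))
    (s : ℕ)
    (δs : ℝ) (hδs : 0 < δs)
    (hSOD : ∀ S : Finset (Fin n), S.card = s → ∀ x y : E,
      (1 / (s : ℝ)) * ∑ i ∈ S,
          ‖gradient (fun z => (1 / (s : ℝ)) * (∑ j ∈ S, f' j z) - f' i z) x
            - gradient (fun z => (1 / (s : ℝ)) * (∑ j ∈ S, f' j z) - f' i z) y‖ ^ 2
        ≤ δs ^ 2 * ‖x - y‖ ^ 2)
    (S : Finset (Fin n)) (hS : S.card = s)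
    (v : E) (lam : ℝ) (hlam : δs < lam)
    (x : Fin n → E)
    (xbarS : E) (hxbarS : xbarS = (1 / (s : ℝ)) • ∑ i ∈ S, x i) :
    (1 / (s : ℝ)) * ∑ i ∈ S,
        ⟪gradient (f' i) (x i)
            + gradient (fun z => (1 / (s : ℝ)) * (∑ j ∈ S, f' j z) - f' i z) xbarS,
          v - x i⟫
      - (1 / (2 * lam)) * ‖(1 / (s : ℝ)) • ∑ i ∈ S, gradient (f' i) (x i)‖ ^ 2
    ≥ ((lam - δs) / 2) * ((1 / (s : ℝ)) * ∑ i ∈ S, ‖v - x i‖ ^ 2)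
      - (1 / lam) * ((1 / (s : ℝ)) * ∑ i ∈ S,
          ‖gradient (f' i) (x i)
            + gradient (fun z => (1 / (s : ℝ)) * (∑ j ∈ S, f' j z) - f' i z) v
            + lam • (x i - v)‖ ^ 2) := by
  subst hxbarS hS
  have hsum_gradient : ∀ y, ∑ i ∈ S,
      gradient (fun z => (1 / (#S : ℝ)) * (∑ j ∈ S, f' j z) - f' i z) y = 0 := fun y =>
    sum_gradient_eq_zero S (fun i _ => by fun_prop) fun z => sum_average_sub_eq_zero S (f' · z)
  exact error_lower_bound_of_sum_eq_zero S _ _ _ x v (hsum_gradient _) (hsum_gradient _)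
    (hSOD S rfl _ _) hδs hlam

/-- Error lower bound (Lemma `thm:ErrorLowerBound`). -/
theorem error_lower_bound
    {E : Type*} [NormedAddCommGroup E] [InnerProductSpace ℝ E] [CompleteSpace E]
    (n : ℕ) (hn : 0 < n)
    (f' : Fin n → E → ℝ) (hdiff : ∀ i, Differentiable ℝ (f' i))
    (s : ℕ) (hs1 : 1 ≤ s) (hsn : s ≤ n)
    (δs : ℝ) (hδs : 0 < δs)
    (hSOD : ∀ S : Finset (Fin n), S.card = s → ∀ x y : E,
      (1 / (s : ℝ)) * ∑ i ∈ S,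
          ‖gradient (fun z => (1 / (s : ℝ)) * (∑ j ∈ S, f' j z) - f' i z) x
            - gradient (fun z => (1 / (s : ℝ)) * (∑ j ∈ S, f' j z) - f' i z) y‖ ^ 2
        ≤ δs ^ 2 * ‖x - y‖ ^ 2)
    (S : Finset (Fin n)) (hS : S.card = s)
    (v : E) (lam : ℝ) (hlam : δs < lam)
    (x : Fin n → E)
    (xbarS : E) (hxbarS : xbarS = (1 / (s : ℝ)) • ∑ i ∈ S, x i) :
    (1 / (s : ℝ)) * ∑ i ∈ S,
        ⟪gradient (f' i) (x i)
            + gradient (fun z => (1 / (s : ℝ)) * (∑ j ∈ S, f' j z) - f' i z) xbarS,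
          v - x i⟫
      - (1 / (2 * lam)) * ‖(1 / (s : ℝ)) • ∑ i ∈ S, gradient (f' i) (x i)‖ ^ 2
    ≥ ((lam - δs) / 2) * ((1 / (s : ℝ)) * ∑ i ∈ S, ‖v - x i‖ ^ 2)
      - (1 / lam) * ((1 / (s : ℝ)) * ∑ i ∈ S,
          ‖gradient (f' i) (x i)
            + gradient (fun z => (1 / (s : ℝ)) * (∑ j ∈ S, f' j z) - f' i z) v
            + lam • (x i - v)‖ ^ 2) :=
  error_lower_bound_general n f' hdiff s δs hδs hSOD S hS v lam hlam x xbarS hxbarS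
end
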